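/- arXiv:2406.00688 — 4 statements merged into one kernel-verified Lean document; each statement's English description precedes it below -/
import Mathlib

section
/- Let k be a positive integer, let N be the 2×2 matrix with rows (1,1) and (0,1) over the nonnegative integers, and let N_k be the Kronecker product of k copies of N. Let Z be a finite ordered alphabet with 2^k letters and let h be an endomorphism of the free monoid Z* whose matrix equals N_k. Let a be the first letter of Z and b the last letter of Z. Then h is upper triangular and, for every positive integer n, the number of occurrences of the letter b in the word a h^n equals n^k. -/
/-!
Counting letters turns composition of endomorphisms into matrix multiplication, so the matrix
of `h ^ n` is `N_k ^ n`. Kronecker powers are multiplicative, hence `N_k ^ n` is the `k`-th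
Kronecker power of `N ^ n = !![1, n; 0, 1]`, whose entry in the first row and last column is the
product of the `k` corner entries, `n ^ k`. Triangularity holds because a Kronecker product of
upper triangular matrices is upper triangular for the lexicographic order on index pairs.
-/

/-- An endomorphism of a free monoid over an ordered alphabet is upper triangular if,
for all letters `x`, the word `x g` contains no letter smaller than `x`
(i.e. its matrix is upper triangular). -/
def IsUpperTriangular {α : Type} [LinearOrder α] (g : Monoid.End (FreeMonoid α)) : Prop :=
  ∀ x y : α, y < x → y ∉ FreeMonoid.toList (g (FreeMonoid.of x))

/-- The Kronecker product of `k` copies of the matrix `!![1, 1; 0, 1]`,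
with the standard (lexicographic) flattening of indices. -/
def kronNPow : (k : ℕ) → Matrix (Fin (2 ^ k)) (Fin (2 ^ k)) ℕ
  | 0 => 1
  | k + 1 =>
      Matrix.reindex (finProdFinEquiv.trans (finCongr (by rw [pow_succ]; ring)))
        (finProdFinEquiv.trans (finCongr (by rw [pow_succ]; ring)))
        (Matrix.kroneckerMap (· * ·) (!![1, 1; 0, 1] : Matrix (Fin 2) (Fin 2) ℕ)
          (kronNPow k))

namespace Matrix

theorem isUpperTriangular_fin_two {R : Type*} [Zero R] (a b d : R) :
    (!![a, b; 0, d] : Matrix (Fin 2) (Fin 2) R).IsUpperTriangular := by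
  intro i j hij
  fin_cases i <;> fin_cases j <;> first | rfl | exact absurd hij (by decide)

theorem upperUnitriangular_pow {R : Type*} [Semiring R] (n : ℕ) :
    (!![1, 1; 0, 1] : Matrix (Fin 2) (Fin 2) R) ^ n = !![1, (n : R); 0, 1] := by
  induction n with
  | zero => simp [one_fin_two]
  | succ n ih =>
    rw [pow_succ, ih, mul_fin_two]
    simp [add_comm]

theorem kroneckerMap_blockTriangular_finProdFinEquiv {R : Type*} [MulZeroClass R] {m n : ℕ}
    {A : Matrix (Fin m) (Fin m) R} {B : Matrix (Fin n) (Fin n) R}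
    (hA : A.IsUpperTriangular) (hB : B.IsUpperTriangular) :
    (kroneckerMap (· * ·) A B).BlockTriangular finProdFinEquiv := by
  rintro ⟨i₁, i₂⟩ ⟨j₁, j₂⟩ hij
  have hlt : j₂.val + n * j₁.val < i₂.val + n * i₁.val := hij
  rw [kroneckerMap_apply]
  rcases lt_trichotomy j₁ i₁ with h₁ | rfl | h₁
  · rw [hA h₁, zero_mul]
  · rw [hB (show j₂ < i₂ from Fin.lt_def.2 (by omega)), mul_zero]
  · have : n * i₁.val + n ≤ n * j₁.val := by
      simpa [Nat.mul_succ] using Nat.mul_le_mul_left n (Fin.lt_def.1 h₁)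
    omega

end Matrix

def finTwoProdPowEquiv (k : ℕ) : Fin 2 × Fin (2 ^ k) ≃ Fin (2 ^ (k + 1)) :=
  finProdFinEquiv.trans (finCongr (by rw [pow_succ]; ring))

theorem finTwoProdPowEquiv_apply_val (k : ℕ) (p : Fin 2 × Fin (2 ^ k)) :
    (finTwoProdPowEquiv k p).val = p.2.val + 2 ^ k * p.1.val := rfl

section KroneckerPower

variable {R : Type*}

def kronPow [Zero R] [One R] [Mul R] (A : Matrix (Fin 2) (Fin 2) R) :
    (k : ℕ) → Matrix (Fin (2 ^ k)) (Fin (2 ^ k)) R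
  | 0 => 1
  | k + 1 =>
      Matrix.reindex (finTwoProdPowEquiv k) (finTwoProdPowEquiv k)
        (Matrix.kroneckerMap (· * ·) A (kronPow A k))

theorem kronNPow_eq_kronPow (k : ℕ) : kronNPow k = kronPow !![1, 1; 0, 1] k := by
  induction k with
  | zero => rfl
  | succ k ih => rw [kronNPow, kronPow, ih]; rfl

theorem kronPow_succ_apply [Zero R] [One R] [Mul R] (A : Matrix (Fin 2) (Fin 2) R) (k : ℕ)
    (i j : Fin 2 × Fin (2 ^ k)) :
    kronPow A (k + 1) (finTwoProdPowEquiv k i) (finTwoProdPowEquiv k j) =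
      A i.1 j.1 * kronPow A k i.2 j.2 := by
  simp [kronPow, Matrix.reindex_apply]

theorem kronPow_one [MulZeroOneClass R] (k : ℕ) :
    kronPow (1 : Matrix (Fin 2) (Fin 2) R) k = 1 := by
  induction k with
  | zero => rfl
  | succ k ih =>
    rw [kronPow, ih, Matrix.one_kronecker_one, Matrix.reindex_apply, Matrix.submatrix_one_equiv]

theorem kronPow_mul [CommSemiring R] (A B : Matrix (Fin 2) (Fin 2) R) (k : ℕ) :
    kronPow (A * B) k = kronPow A k * kronPow B k := by
  induction k with
  | zero => exact (mul_one 1).symm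
  | succ k ih =>
    simp only [kronPow, Matrix.reindex_apply, Matrix.submatrix_mul_equiv, ih,
      Matrix.mul_kronecker_mul]

theorem kronPow_pow [CommSemiring R] (A : Matrix (Fin 2) (Fin 2) R) (k n : ℕ) :
    kronPow (A ^ n) k = kronPow A k ^ n := by
  induction n with
  | zero => rw [pow_zero, pow_zero, kronPow_one]
  | succ n ih => rw [pow_succ, kronPow_mul, ih, pow_succ]

theorem kronPow_apply_zero_last [MonoidWithZero R] (A : Matrix (Fin 2) (Fin 2) R) (k : ℕ) :
    kronPow A k ⟨0, by positivity⟩ ⟨2 ^ k - 1, Nat.sub_lt (by positivity) one_pos⟩ =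
      A 0 1 ^ k := by
  induction k with
  | zero => exact (Matrix.one_apply_eq (α := R) (0 : Fin (2 ^ 0))).trans (pow_zero _).symm
  | succ k ih =>
    have h₀ : (⟨0, by positivity⟩ : Fin (2 ^ (k + 1))) =
        finTwoProdPowEquiv k (0, ⟨0, by positivity⟩) := Fin.ext rfl
    have h₁ : (⟨2 ^ (k + 1) - 1, Nat.sub_lt (by positivity) one_pos⟩ : Fin (2 ^ (k + 1))) =
        finTwoProdPowEquiv k (1, ⟨2 ^ k - 1, Nat.sub_lt (by positivity) one_pos⟩) := by
      refine Fin.ext ?_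
      change 2 ^ (k + 1) - 1 = (2 ^ k - 1) + 2 ^ k * 1
      have := Nat.one_le_two_pow (n := k)
      rw [pow_succ]
      omega
    rw [h₀, h₁, kronPow_succ_apply, ih, pow_succ']

theorem kronPow_isUpperTriangular [MulZeroOneClass R] {A : Matrix (Fin 2) (Fin 2) R}
    (hA : A.IsUpperTriangular) (k : ℕ) : (kronPow A k).IsUpperTriangular := by
  induction k with
  | zero => exact Matrix.blockTriangular_one
  | succ k ih =>
    rw [Matrix.IsUpperTriangular, kronPow, Matrix.blockTriangular_reindex_iff]
    exact Matrix.kroneckerMap_blockTriangular_finProdFinEquiv hA ih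

end KroneckerPower

namespace FreeMonoid

variable {α : Type*} [DecidableEq α]

def letterMatrix (g : Monoid.End (FreeMonoid α)) : Matrix α α ℕ :=
  Matrix.of fun x y => (g (of x)).toList.count y

@[simp]
theorem letterMatrix_apply (g : Monoid.End (FreeMonoid α)) (x y : α) :
    letterMatrix g x y = (g (of x)).toList.count y := rfl

theorem count_toList_apply_eq_sum [Fintype α] (g : Monoid.End (FreeMonoid α)) (w : FreeMonoid α)
    (y : α) : (g w).toList.count y = ∑ x, w.toList.count x * letterMatrix g x y := by
  induction w using FreeMonoid.inductionOn' with
  | one => simp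
  | of_mul a w ih =>
    simp only [map_mul, toList_mul, List.count_append, ih, toList_of, List.count_singleton',
      add_mul, Finset.sum_add_distrib, boole_mul, Finset.sum_ite_eq, Finset.mem_univ, if_true,
      letterMatrix_apply]

/-- The order is reversed because `f * g` in `Monoid.End` applies `g` first. -/
theorem letterMatrix_mul [Fintype α] (f g : Monoid.End (FreeMonoid α)) :
    letterMatrix (f * g) = letterMatrix g * letterMatrix f := by
  ext x y
  exact count_toList_apply_eq_sum f (g (of x)) y

theorem letterMatrix_pow [Fintype α] (g : Monoid.End (FreeMonoid α)) (n : ℕ) :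
    letterMatrix (g ^ n) = letterMatrix g ^ n := by
  induction n with
  | zero =>
    ext x y
    rw [letterMatrix_apply, pow_zero, pow_zero, Matrix.one_apply]
    exact List.count_singleton' y x
  | succ n ih => rw [pow_succ, letterMatrix_mul, ih, pow_succ']

end FreeMonoid

theorem isUpperTriangular_iff_letterMatrix {α : Type} [LinearOrder α]
    (g : Monoid.End (FreeMonoid α)) :
    IsUpperTriangular g ↔ (FreeMonoid.letterMatrix g).IsUpperTriangular := by
  simp only [IsUpperTriangular, Matrix.IsUpperTriangular, Matrix.BlockTriangular, id,
    FreeMonoid.letterMatrix_apply, List.count_eq_zero]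

/-- if the matrix of an endomorphism `h` of the free monoid on `2^k`
ordered letters is the `k`-fold Kronecker power of `!![1,1;0,1]`, then `h` is upper
triangular and the number of occurrences of the last letter in `a h^n` is `n^k`,
where `a` is the first letter. -/
theorem statement1 (k : ℕ)
    (h : Monoid.End (FreeMonoid (Fin (2 ^ k))))
    (hmat : ∀ x y : Fin (2 ^ k),
      List.count y (FreeMonoid.toList (h (FreeMonoid.of x))) = kronNPow k x y) :
    IsUpperTriangular h ∧
      ∀ n : ℕ, 0 < n →
        List.count (⟨2 ^ k - 1, Nat.sub_lt (by positivity) one_pos⟩ : Fin (2 ^ k))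
            (FreeMonoid.toList ((h ^ n) (FreeMonoid.of (⟨0, by positivity⟩ : Fin (2 ^ k))))) =
          n ^ k := by
  have hM : FreeMonoid.letterMatrix h = kronPow !![1, 1; 0, 1] k := by
    ext x y
    rw [FreeMonoid.letterMatrix_apply, hmat, kronNPow_eq_kronPow]
  refine ⟨?_, fun n _ => ?_⟩
  · rw [isUpperTriangular_iff_letterMatrix, hM]
    exact kronPow_isUpperTriangular (Matrix.isUpperTriangular_fin_two 1 1 1) k
  · rw [← FreeMonoid.letterMatrix_apply, FreeMonoid.letterMatrix_pow, hM, ← kronPow_pow,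
      Matrix.upperUnitriangular_pow, kronPow_apply_zero_last]
    rfl
end

section
/- Let t be a positive integer and let α1,…,αt be nonnegative integers. Then there exists an M-triple (A,g1,g2) of dimension t such that the map (n1,…,nt) ↦ n1^{α1} n2^{α2} ⋯ nt^{αt} from ℤ₊^t to ℤ₊ is computable by (A,g1,g2). -/
structure MTriple (t : ℕ) (α : Type) [Fintype α] [LinearOrder α] where
  g1 : Monoid.End (FreeMonoid α)
  g2 : Monoid.End (FreeMonoid α)
  lvl : α → ℕ
  lvl_mono : Monotone lvl
  lvl_le : ∀ x, lvl x ≤ t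
  lvl_surj : ∀ i : ℕ, i ≤ t → ∃ x, lvl x = i
  tri_g1 : IsUpperTriangular g1
  tri_g2 : IsUpperTriangular g2
  last : α
  last_top : ∀ x, x ≤ last
  lvl_last : ∀ x, lvl x = t ↔ x = last
  g1_lvl : ∀ x : α, ∀ y ∈ FreeMonoid.toList (g1 (FreeMonoid.of x)), lvl y = lvl x
  g2_lvl : ∀ x : α, lvl x < t → ∀ y ∈ FreeMonoid.toList (g2 (FreeMonoid.of x)), lvl y = lvl x + 1
  g2_sq : ∀ x : α, g2 (g2 (FreeMonoid.of x)) = 1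
  g1_last : g1 (FreeMonoid.of last) = 1
  g2_last : g2 (FreeMonoid.of last) = 1

def ComputableBy {t : ℕ} {α : Type} [Fintype α] [LinearOrder α] (T : MTriple t α)
    (f : (Fin t → ℕ) → ℕ) : Prop :=
  ∃ w : FreeMonoid α, (∀ y ∈ FreeMonoid.toList w, T.lvl y = 0) ∧
    ∀ n : Fin t → ℕ, (∀ i, 0 < n i) →
      (List.finRange t).foldl (fun u i => T.g2 ((T.g1 ^ n i) u)) w =
        FreeMonoid.of T.last ^ f n

/-!
Level `i < t` of the alphabet is a head letter `h_i` followed by letters `z_{i,B}, …, z_{i,0}`,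
where `B` bounds the exponents. On each level `g1` is the Pascal substitution
`z_{i,j} ↦ ∏_{k ≤ j} z_{i,k} ^ C(j,k)`, and `h_i` goes where `z_{i,αᵢ}` goes; by the binomial
theorem `g1 ^ n` then makes exactly `n ^ αᵢ` copies of `z_{i,0}` out of `h_i`. The map `g2` erases
every letter except `z_{i,0}`, which it sends to `h_{i+1}`, so one round `g1 ^ nᵢ` followed by `g2`
turns `h_i ^ N` into `h_{i+1} ^ (N * nᵢ ^ αᵢ)`. The head letter of level `t` is the last letter.
-/

open FreeMonoid

theorem Monoid.End.pow_succ_apply' {M : Type*} [Monoid M] (g : Monoid.End M) (n : ℕ) (u : M) :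
    (g ^ (n + 1)) u = (g ^ n) (g u) := by
  rw [pow_succ]; rfl

theorem List.foldl_finRange_of_step {α : Type*} {t : ℕ} (s : ℕ → α) (f : α → Fin t → α)
    (hf : ∀ i : Fin t, f (s i) i = s (i + 1)) : (List.finRange t).foldl f (s 0) = s t := by
  induction t with
  | zero => rfl
  | succ t ih =>
    rw [List.finRange_succ_last, List.foldl_append, List.foldl_map,
      ih (fun u i => f u i.castSucc) fun i => hf i.castSucc]
    exact hf (Fin.last t)

namespace FreeMonoid

variable {β : Type*}

theorem forall_mem_map_of_forall_mem {p : β → Prop} (φ : FreeMonoid β →* FreeMonoid β)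
    (hφ : ∀ x, p x → ∀ y ∈ toList (φ (of x)), p y) (u : FreeMonoid β)
    (hu : ∀ y ∈ toList u, p y) : ∀ y ∈ toList (φ u), p y := by
  induction u using FreeMonoid.inductionOn' with
  | one => simp [toList_one]
  | of_mul x u ih =>
    simp only [toList_of_mul, List.mem_cons, forall_eq_or_imp] at hu
    simp only [map_mul, toList_mul, List.mem_append]
    rintro y (hy | hy)
    exacts [hφ x hu.1 y hy, ih hu.2 y hy]

theorem forall_mem_pow_apply_of_forall_mem {p : β → Prop} (g : Monoid.End (FreeMonoid β))
    (hg : ∀ x, p x → ∀ y ∈ toList (g (of x)), p y) (n : ℕ) (u : FreeMonoid β)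
    (hu : ∀ y ∈ toList u, p y) : ∀ y ∈ toList ((g ^ n) u), p y := by
  induction n generalizing u with
  | zero => exact hu
  | succ n ih =>
    rw [Monoid.End.pow_succ_apply']
    exact ih _ (forall_mem_map_of_forall_mem g hg u hu)

theorem toList_of_pow (x : β) (m : ℕ) : toList (of x ^ m) = List.replicate m x := by
  induction m with
  | zero => rfl
  | succ m ih => rw [pow_succ, toList_mul, ih, toList_of, List.replicate_succ']

def pascalWord (z : ℕ → β) (j : ℕ) : FreeMonoid β :=
  ((List.range (j + 1)).map fun k => of (z k) ^ j.choose k).prod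

theorem exists_eq_of_mem_pascalWord {z : ℕ → β} {j : ℕ} {y : β}
    (hy : y ∈ toList (pascalWord z j)) : ∃ k ≤ j, y = z k := by
  simp only [pascalWord, toList_prod, List.map_map, List.mem_flatten, List.mem_map,
    List.mem_range, Function.comp_apply] at hy
  obtain ⟨_, ⟨k, hk, rfl⟩, hy⟩ := hy
  rw [toList_of_pow, List.mem_replicate] at hy
  exact ⟨k, by omega, hy.2⟩

variable [DecidableEq β]

theorem count_toList_pow (x : β) (u : FreeMonoid β) (m : ℕ) :
    (toList (u ^ m)).count x = m * (toList u).count x := by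
  induction m with
  | zero => simp [toList_one]
  | succ m ih => rw [pow_succ, toList_mul, List.count_append, ih]; ring

theorem map_eq_pow_count {M F : Type*} [Monoid M] [FunLike F (FreeMonoid β) M]
    [MonoidHomClass F (FreeMonoid β) M] (φ : F) (x : β) (m : M)
    (u : FreeMonoid β) (h : ∀ y ∈ toList u, φ (of y) = if y = x then m else 1) :
    φ u = m ^ (toList u).count x := by
  induction u using FreeMonoid.inductionOn' with
  | one => simp [toList_one]
  | of_mul y u ih =>
    simp only [toList_of_mul, List.mem_cons, forall_eq_or_imp] at h
    rw [map_mul, ih h.2, h.1, toList_of_mul, List.count_cons]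
    split_ifs with hyx <;> simp_all [pow_succ']

theorem count_map_pascalWord (φ : Monoid.End (FreeMonoid β)) (x : β) (z : ℕ → β) (j : ℕ) :
    (toList (φ (pascalWord z j))).count x =
      ∑ k ∈ Finset.range (j + 1), j.choose k * (toList (φ (of (z k)))).count x := by
  simp only [pascalWord, map_list_prod, toList_prod, List.count_flatten, List.map_map]
  simp [Finset.sum, Multiset.range, Function.comp_def, count_toList_pow]

theorem count_pow_apply_of_eq_pascalWord (g : Monoid.End (FreeMonoid β)) (z : ℕ → β) {J : ℕ}
    (hz : ∀ k ≤ J, z k = z 0 → k = 0) (hg : ∀ j ≤ J, g (of (z j)) = pascalWord z j) (n : ℕ)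
    {j : ℕ} (hj : j ≤ J) : (toList ((g ^ n) (of (z j)))).count (z 0) = n ^ j := by
  induction n generalizing j with
  | zero =>
    rcases Nat.eq_zero_or_pos j with rfl | hj0
    · simp [toList_of]
    · simp only [pow_zero, Monoid.End.coe_one, id_eq, toList_of, List.count_singleton, beq_iff_eq,
        Nat.zero_pow hj0, ite_eq_right_iff]
      exact fun h => absurd (hz j hj h) hj0.ne'
  | succ n ih =>
    rw [Monoid.End.pow_succ_apply', hg j hj, count_map_pascalWord, add_pow]
    refine Finset.sum_congr rfl fun k hk => ?_
    rw [ih ((Finset.mem_range_succ_iff.1 hk).trans hj), one_pow, mul_one, Nat.cast_id, mul_comm]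

end FreeMonoid

namespace MonomialTriple

open FreeMonoid Fin.NatCast

variable (t B : ℕ) (e : ℕ → ℕ)

/-- Level `i < t` consists of the `B + 2` letters `i * (B + 2), …, i * (B + 2) + B + 1`;
the last letter `t * (B + 2)` is alone on level `t`. -/
abbrev Letter : Type := Fin (t * (B + 2) + 1)

variable {t B}

def level (x : Letter t B) : ℕ := x.val / (B + 2)

variable (t B)

def headLetter (i : ℕ) : Letter t B := (i * (B + 2) : ℕ)

def zLetter (i k : ℕ) : Letter t B := (i * (B + 2) + (B + 1 - k) : ℕ)

variable {t B}

/-- The letter `z_{i,j}` has index `j`; the head letter of level `i` has index `e i`. -/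
def pascalIndex (x : Letter t B) : ℕ :=
  if x.val % (B + 2) = 0 then e (level x) else B + 1 - x.val % (B + 2)

variable (t B)

def g1 : Monoid.End (FreeMonoid (Letter t B)) :=
  lift fun x => if x = Fin.last _ then 1 else pascalWord (zLetter t B (level x)) (pascalIndex e x)

def g2 : Monoid.End (FreeMonoid (Letter t B)) :=
  lift fun x => if x.val % (B + 2) = B + 1 then of ((x.val + 1 : ℕ) : Letter t B) else 1

variable {t B}

theorem g1_of (x : Letter t B) : g1 t B e (of x) =
    if x = Fin.last _ then 1 else pascalWord (zLetter t B (level x)) (pascalIndex e x) :=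
  rfl

theorem g2_of (x : Letter t B) : g2 t B (of x) =
    if x.val % (B + 2) = B + 1 then of ((x.val + 1 : ℕ) : Letter t B) else 1 :=
  rfl

theorem val_natCast {v : ℕ} (hv : v ≤ t * (B + 2)) : ((v : Letter t B) : ℕ) = v :=
  Nat.mod_eq_of_lt (Nat.lt_succ_of_le hv)

theorem level_natCast {i p : ℕ} (hp : p < B + 2) (hv : i * (B + 2) + p ≤ t * (B + 2)) :
    level ((i * (B + 2) + p : ℕ) : Letter t B) = i := by
  rw [level, val_natCast hv, Nat.add_comm, Nat.add_mul_div_right p i (by omega),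
    Nat.div_eq_of_lt hp, zero_add]

theorem val_eq_level_add_mod (x : Letter t B) : x.val = level x * (B + 2) + x.val % (B + 2) :=
  (Nat.div_add_mod' _ _).symm

theorem level_le (x : Letter t B) : level x ≤ t :=
  Nat.div_le_of_le_mul (by have := x.isLt; have := Nat.mul_comm t (B + 2); omega)

theorem level_eq_iff_eq_last (x : Letter t B) : level x = t ↔ x = Fin.last _ := by
  have := x.isLt
  have := val_eq_level_add_mod x
  rw [Fin.ext_iff, Fin.val_last]
  constructor
  · intro h; rw [h] at this; omega
  · intro h; rw [level, h, Nat.mul_div_cancel _ (by omega)]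

theorem val_headLetter {i : ℕ} (hi : i ≤ t) : (headLetter t B i).val = i * (B + 2) :=
  val_natCast (Nat.mul_le_mul_right _ hi)

theorem level_headLetter {i : ℕ} (hi : i ≤ t) : level (headLetter t B i) = i := by
  rw [level, val_headLetter hi, Nat.mul_div_cancel _ (by omega)]

theorem headLetter_self : headLetter t B t = Fin.last _ :=
  Fin.ext (val_headLetter le_rfl)

theorem zLetter_bound {i k : ℕ} (hi : i < t) : i * (B + 2) + (B + 1 - k) ≤ t * (B + 2) := by
  have := Nat.mul_le_mul_right (B + 2) (Nat.succ_le_of_lt hi)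
  rw [Nat.succ_mul] at this
  omega

theorem val_zLetter {i k : ℕ} (hi : i < t) : (zLetter t B i k).val = i * (B + 2) + (B + 1 - k) :=
  val_natCast (zLetter_bound hi)

theorem level_zLetter {i k : ℕ} (hi : i < t) : level (zLetter t B i k) = i :=
  level_natCast (by omega) (zLetter_bound hi)

theorem natCast_mod {i p : ℕ} (hp : p < B + 2) (hv : i * (B + 2) + p ≤ t * (B + 2)) :
    ((i * (B + 2) + p : ℕ) : Letter t B).val % (B + 2) = p := by
  rw [val_natCast hv, Nat.add_comm, Nat.add_mul_mod_self_right, Nat.mod_eq_of_lt hp]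

theorem val_add_one_le_of_mod_eq {x : Letter t B} (hx : x.val % (B + 2) = B + 1) :
    x.val + 1 ≤ t * (B + 2) := by
  have hlt := x.isLt
  have hval := val_eq_level_add_mod x
  have hle : level x + 1 ≤ t := by
    rcases (level_le x).lt_or_eq with h | h
    · exact h
    · rw [h] at hval; omega
  have := Nat.mul_le_mul_right (B + 2) hle
  rw [Nat.succ_mul] at this
  omega

theorem g1_of_zLetter {i j : ℕ} (hi : i < t) (hj : j ≤ B) :
    g1 t B e (of (zLetter t B i j)) = pascalWord (zLetter t B i) j := by
  have hmod : (zLetter t B i j).val % (B + 2) = B + 1 - j :=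
    natCast_mod (by omega) (zLetter_bound hi)
  have hne : zLetter t B i j ≠ Fin.last _ := by
    rw [Ne, ← level_eq_iff_eq_last, level_zLetter hi]; omega
  rw [g1_of, if_neg hne, level_zLetter hi, pascalIndex, hmod]
  congr 1
  split_ifs <;> omega

theorem g1_of_headLetter {i : ℕ} (hi : i < t) :
    g1 t B e (of (headLetter t B i)) = pascalWord (zLetter t B i) (e i) := by
  have hmod : (headLetter t B i).val % (B + 2) = 0 := by
    rw [val_headLetter hi.le, Nat.mul_mod_left]
  have hne : headLetter t B i ≠ Fin.last _ := by
    rw [Ne, ← level_eq_iff_eq_last, level_headLetter hi.le]; omega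
  rw [g1_of, if_neg hne, pascalIndex, hmod, if_pos rfl, level_headLetter hi.le]

theorem level_eq_and_le_of_mem_g1 {x y : Letter t B} (hy : y ∈ toList (g1 t B e (of x))) :
    level y = level x ∧ x ≤ y := by
  by_cases hx : x = Fin.last _
  · simp [g1_of, hx, toList_one] at hy
  have hlt : level x < t := lt_of_le_of_ne (level_le x) (by rwa [Ne, level_eq_iff_eq_last])
  rw [g1_of, if_neg hx] at hy
  obtain ⟨k, hk, rfl⟩ := exists_eq_of_mem_pascalWord hy
  refine ⟨level_zLetter hlt, Fin.le_def.mpr ?_⟩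
  have hval := val_eq_level_add_mod x
  have hmod := Nat.mod_lt x.val (show 0 < B + 2 by omega)
  rw [val_zLetter hlt]
  unfold pascalIndex at hk
  split_ifs at hk <;> omega

theorem mod_eq_and_val_eq_of_mem_g2 {x y : Letter t B} (hy : y ∈ toList (g2 t B (of x))) :
    x.val % (B + 2) = B + 1 ∧ y.val = x.val + 1 := by
  rw [g2_of] at hy
  split_ifs at hy with h
  · rw [toList_of, List.mem_singleton] at hy
    exact ⟨h, hy ▸ val_natCast (val_add_one_le_of_mod_eq h)⟩
  · simp [toList_one] at hy

theorem level_of_mem_g2 {x y : Letter t B} (hy : y ∈ toList (g2 t B (of x))) :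
    level y = level x + 1 := by
  obtain ⟨hmod, hval⟩ := mod_eq_and_val_eq_of_mem_g2 hy
  have hx := val_eq_level_add_mod x
  have : y.val = (level x + 1) * (B + 2) := by rw [Nat.succ_mul]; omega
  rw [level, this, Nat.mul_div_cancel _ (by omega)]

theorem g2_g2_of (x : Letter t B) : g2 t B (g2 t B (of x)) = 1 := by
  rw [g2_of]
  split_ifs with h
  · have hval := val_eq_level_add_mod x
    have hle := val_add_one_le_of_mod_eq h
    rw [g2_of, if_neg]
    rw [val_natCast hle, show x.val + 1 = (level x + 1) * (B + 2) by rw [Nat.succ_mul]; omega,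
      Nat.mul_mod_left]
    omega
  · exact map_one _

theorem g2_of_of_level_eq {x : Letter t B} {i : ℕ} (hi : i < t) (hx : level x = i) :
    g2 t B (of x) = if x = zLetter t B i 0 then of (headLetter t B (i + 1)) else 1 := by
  have hval := hx ▸ val_eq_level_add_mod x
  have hmod := Nat.mod_lt x.val (show 0 < B + 2 by omega)
  have hz : x = zLetter t B i 0 ↔ x.val % (B + 2) = B + 1 := by
    rw [Fin.ext_iff, val_zLetter hi]; omega
  rw [g2_of]
  by_cases h : x.val % (B + 2) = B + 1
  · rw [if_pos h, if_pos (hz.2 h), headLetter, Nat.succ_mul]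
    congr 2
    omega
  · rw [if_neg h, if_neg (mt hz.1 h)]

theorem g2_g1_pow_of_headLetter {i n : ℕ} (hi : i < t) (he : e i ≤ B) (hn : 0 < n) :
    g2 t B ((g1 t B e ^ n) (of (headLetter t B i))) = of (headLetter t B (i + 1)) ^ n ^ e i := by
  obtain ⟨n, rfl⟩ : ∃ m, n = m + 1 := ⟨n - 1, by omega⟩
  have hstart : (g1 t B e ^ (n + 1)) (of (headLetter t B i)) =
      (g1 t B e ^ (n + 1)) (of (zLetter t B i (e i))) := by
    rw [Monoid.End.pow_succ_apply', Monoid.End.pow_succ_apply', g1_of_headLetter e hi,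
      g1_of_zLetter e hi he]
  have hlevel : ∀ y ∈ toList ((g1 t B e ^ (n + 1)) (of (zLetter t B i (e i)))), level y = i :=
    forall_mem_pow_apply_of_forall_mem _
      (fun _ hx _ hy => (level_eq_and_le_of_mem_g1 e hy).1.trans hx) _ _
      (by simp [toList_of, level_zLetter hi])
  have hz : ∀ k ≤ B, zLetter t B i k = zLetter t B i 0 → k = 0 := fun k hk h => by
    have := congrArg Fin.val h
    rw [val_zLetter hi, val_zLetter hi] at this
    omega
  rw [hstart, map_eq_pow_count (g2 t B) (zLetter t B i 0) _ _
      fun y hy => g2_of_of_level_eq hi (hlevel y hy),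
    count_pow_apply_of_eq_pascalWord (g1 t B e) (zLetter t B i) hz
      (fun j hj => g1_of_zLetter e hi hj) _ he]

variable (t B)

def triple : MTriple t (Letter t B) where
  g1 := g1 t B e
  g2 := g2 t B
  lvl := level
  lvl_mono := fun _ _ h => Nat.div_le_div_right h
  lvl_le := level_le
  lvl_surj := fun i hi => ⟨headLetter t B i, level_headLetter hi⟩
  tri_g1 := fun _ _ hyx hy => not_le.2 hyx (level_eq_and_le_of_mem_g1 e hy).2
  tri_g2 := fun _ _ hyx hy => by
    have := (mod_eq_and_val_eq_of_mem_g2 hy).2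
    rw [Fin.lt_def] at hyx
    omega
  last := Fin.last _
  last_top := Fin.le_last
  lvl_last := level_eq_iff_eq_last
  g1_lvl := fun _ _ hy => (level_eq_and_le_of_mem_g1 e hy).1
  g2_lvl := fun _ _ _ hy => level_of_mem_g2 hy
  g2_sq := g2_g2_of
  g1_last := by rw [g1_of, if_pos rfl]
  g2_last := by rw [g2_of, if_neg (by rw [Fin.val_last, Nat.mul_mod_left]; omega)]

theorem computableBy_triple (he : ∀ i < t, e i ≤ B) :
    ComputableBy (triple t B e) fun n => ∏ i, n i ^ e i := by
  refine ⟨of (headLetter t B 0), ?_, fun n hn => ?_⟩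
  · intro y hy
    rw [toList_of, List.mem_singleton] at hy
    exact hy ▸ level_headLetter (Nat.zero_le t)
  let N : ℕ → ℕ := fun k => if h : k < t then n ⟨k, h⟩ ^ e k else 1
  have hstep := List.foldl_finRange_of_step
    (fun k => of (headLetter t B k) ^ ∏ j ∈ Finset.range k, N j)
    (fun u i => (triple t B e).g2 (((triple t B e).g1 ^ n i) u)) fun i => by
      show g2 t B ((g1 t B e ^ n i) _) = _
      rw [map_pow, map_pow, g2_g1_pow_of_headLetter e i.isLt (he i i.isLt) (hn i), ← pow_mul,
        Finset.prod_range_succ, mul_comm]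
      simp [N]
  have hprod : ∏ i, n i ^ e i = ∏ j ∈ Finset.range t, N j := by
    rw [← Fin.prod_univ_eq_prod_range]
    simp [N]
  beta_reduce
  rw [hprod, show (triple t B e).last = headLetter t B t from headLetter_self.symm]
  simpa only [Finset.range_zero, Finset.prod_empty, pow_one] using hstep

end MonomialTriple

theorem statement2_general (t : ℕ) (a : Fin t → ℕ) :
    ∃ (m : ℕ) (T : MTriple t (Fin m)),
      ComputableBy T (fun n => ∏ i, n i ^ a i) := by
  let e : ℕ → ℕ := fun k => if h : k < t then a ⟨k, h⟩ else 0
  have he : ∀ i < t, e i ≤ ∑ j, a j := fun i hi => by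
    simpa [e, hi] using
      Finset.single_le_sum (fun j _ => Nat.zero_le (a j)) (Finset.mem_univ ⟨i, hi⟩)
  refine ⟨_, MonomialTriple.triple t (∑ j, a j) e, ?_⟩
  simpa [e] using MonomialTriple.computableBy_triple t (∑ j, a j) e he

/-- every monomial with coefficient 1 is computable by an M-triple. -/
theorem statement2 (t : ℕ) (ht : 0 < t) (a : Fin t → ℕ) :
    ∃ (m : ℕ) (T : MTriple t (Fin m)),
      ComputableBy T (fun n => ∏ i, n i ^ a i) :=
  statement2_general t a
end

section
/- Let t be a positive integer, let F = (A,f1,f2) and G = (B,g1,g2) be M-triples of dimension t with A ∩ B = ∅, let p, q : ℤ₊^t → ℤ₊ be maps such that p is computable by F and q is computable by G, and let α, β be positive integers. Then there exists an M-triple of dimension t by which the map αp + βq is computable. -/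
/-!
Glue the two alphabets along their final letters and let the new endomorphisms act as
those of `F` on letters of `F` and as those of `G` on letters of `G`. Ordering letters by level
first keeps both endomorphisms upper triangular and the partition compatible with the order.
The letter embeddings of `A*` and `B*` intertwine the old and new endomorphisms, and the
composite `g1^{n 1} g2 ⋯ g1^{n t} g2` is a monoid endomorphism, so if `u` computes `p` and `v`
computes `q`, the word `u^a v^b` computes `a p + b q`. Finally the glued alphabet is relabelled
as `Fin m` along its order isomorphism.
-/

open FreeMonoid

namespace FreeMonoid

variable {α γ : Type}

theorem mem_toList_of_mem_toList_pow {w : FreeMonoid α} {x : α} {k : ℕ}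
    (h : x ∈ toList (w ^ k)) : x ∈ toList w := by
  induction k with
  | zero => exact absurd h List.not_mem_nil
  | succ k ih =>
    rw [pow_succ, toList_mul, List.mem_append] at h
    exact h.elim ih id

def endCongr (e : α ≃ γ) (g : Monoid.End (FreeMonoid α)) : Monoid.End (FreeMonoid γ) :=
  (map e).comp ((g : FreeMonoid α →* FreeMonoid α).comp (map e.symm))

theorem endCongr_apply (e : α ≃ γ) (g : Monoid.End (FreeMonoid α)) (w : FreeMonoid γ) :
    endCongr e g w = map e (g (map e.symm w)) :=
  rfl

theorem semiconj_endCongr (e : α ≃ γ) (g : Monoid.End (FreeMonoid α)) :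
    Function.Semiconj (map e) g (endCongr e g) := fun w => by
  rw [endCongr_apply, map_symm_apply_map_eq]

theorem mem_toList_endCongr_of (e : α ≃ γ) (g : Monoid.End (FreeMonoid α)) {c d : γ} :
    d ∈ toList (endCongr e g (of c)) ↔ e.symm d ∈ toList (g (of (e.symm c))) := by
  simp only [endCongr_apply, map_of, toList_map, List.mem_map, ← e.eq_symm_apply,
    exists_eq_right]

end FreeMonoid

namespace MTriple

variable {t : ℕ} {α β γ : Type} [Fintype α] [LinearOrder α] [Fintype β] [LinearOrder β]
  [Fintype γ] [LinearOrder γ]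

theorem lvl_lt_of_ne_last (T : MTriple t α) {x : α} (hx : x ≠ T.last) : T.lvl x < t :=
  (T.lvl_le x).lt_of_ne (mt (T.lvl_last x).1 hx)

/-- The paper's `w ↦ w g1^{n 1} g2 ⋯ g1^{n t} g2`. -/
def run (T : MTriple t α) (n : Fin t → ℕ) : Monoid.End (FreeMonoid α) :=
  (List.finRange t).foldl (fun h i => T.g2 * T.g1 ^ n i * h) 1

theorem run_apply (T : MTriple t α) (n : Fin t → ℕ) (w : FreeMonoid α) :
    T.run n w = (List.finRange t).foldl (fun u i => T.g2 ((T.g1 ^ n i) u)) w :=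
  (List.foldl_hom (fun h : Monoid.End (FreeMonoid α) => h w) fun _ _ => rfl).symm

theorem semiconj_run {T : MTriple t α} {T' : MTriple t γ} {f : FreeMonoid α → FreeMonoid γ}
    (h₁ : Function.Semiconj f T.g1 T'.g1) (h₂ : Function.Semiconj f T.g2 T'.g2)
    (n : Fin t → ℕ) : Function.Semiconj f (T.run n) (T'.run n) := fun w => by
  rw [run_apply, run_apply]
  refine (List.foldl_hom f fun u i => ?_).symm
  rw [Monoid.End.coe_pow, Monoid.End.coe_pow, h₂.eq, (h₁.iterate_right _).eq]

inductive Glue (F : MTriple t α) (G : MTriple t β) : Type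
  | inl (x : α) (hx : x ≠ F.last)
  | inr (y : β) (hy : y ≠ G.last)
  | last
  deriving DecidableEq, Fintype

namespace Glue

variable {F : MTriple t α} {G : MTriple t β}

def toSum : Glue F G → α ⊕ β
  | inl x _ => .inl x
  | inr y _ => .inr y
  | last => .inl F.last

theorem toSum_injective : Function.Injective (toSum : Glue F G → α ⊕ β) := by
  rintro (⟨x, hx⟩ | ⟨y, hy⟩ | _) (⟨x', hx'⟩ | ⟨y', hy'⟩ | _) h <;>
    simp_all [toSum, eq_comm]

def lvl (c : Glue F G) : ℕ := Sum.elim F.lvl G.lvl c.toSum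

def key (c : Glue F G) : ℕ ×ₗ (α ⊕ₗ β) := toLex (c.lvl, toLex c.toSum)

theorem key_injective : Function.Injective (key : Glue F G → _) := fun _ _ h =>
  toSum_injective (congrArg (fun k => ofLex (ofLex k).2) h)

noncomputable instance : LinearOrder (Glue F G) := LinearOrder.lift' key key_injective

theorem lt_iff_key_lt {c d : Glue F G} : c < d ↔ c.key < d.key := Iff.rfl

variable (F G)

def ofLeft (x : α) : Glue F G := if h : x = F.last then last else inl x h

def ofRight (y : β) : Glue F G := if h : y = G.last then last else inr y h

theorem ofLeft_last : ofLeft F G F.last = last := dif_pos rfl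

theorem ofRight_last : ofRight F G G.last = last := dif_pos rfl

@[elab_as_elim]
theorem induction {P : Glue F G → Prop} (left : ∀ x, P (ofLeft F G x))
    (right : ∀ y, P (ofRight F G y)) (c : Glue F G) : P c := by
  cases c with
  | inl x hx => simpa [ofLeft, hx] using left x
  | inr y hy => simpa [ofRight, hy] using right y
  | last => simpa [ofLeft_last] using left F.last

theorem key_ofLeft (x : α) : (ofLeft F G x).key = toLex (F.lvl x, toLex (.inl x)) := by
  unfold ofLeft
  split_ifs with h
  · subst h; simp [key, lvl, toSum, (F.lvl_last _).2]
  · rfl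

theorem key_ofRight {y : β} (hy : y ≠ G.last) :
    (ofRight F G y).key = toLex (G.lvl y, toLex (.inr y)) := by
  simp [ofRight, hy, key, lvl, toSum]

theorem lvl_ofLeft (x : α) : (ofLeft F G x).lvl = F.lvl x :=
  congrArg (fun k => (ofLex k).1) (key_ofLeft F G x)

theorem lvl_ofRight (y : β) : (ofRight F G y).lvl = G.lvl y := by
  by_cases hy : y = G.last
  · subst hy; simp [ofRight_last, lvl, toSum, (F.lvl_last _).2, (G.lvl_last _).2]
  · exact congrArg (fun k => (ofLex k).1) (key_ofRight F G hy)

theorem strictMono_ofLeft : StrictMono (ofLeft F G) := fun x x' h => by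
  rw [lt_iff_key_lt, key_ofLeft, key_ofLeft, Prod.Lex.lt_iff]
  exact (F.lvl_mono h.le).lt_or_eq.imp id fun e => ⟨e, Sum.Lex.inl_lt_inl_iff.2 h⟩

theorem strictMono_ofRight : StrictMono (ofRight F G) := fun y y' h => by
  have hy : y ≠ G.last := (h.trans_le (G.last_top y')).ne
  rw [lt_iff_key_lt, key_ofRight F G hy]
  by_cases hy' : y' = G.last
  · subst hy'
    rw [ofRight_last, ← ofLeft_last F G, key_ofLeft, Prod.Lex.lt_iff, (F.lvl_last _).2 rfl]
    exact Or.inl (G.lvl_lt_of_ne_last hy)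
  · rw [key_ofRight F G hy', Prod.Lex.lt_iff]
    exact (G.lvl_mono h.le).lt_or_eq.imp id fun e => ⟨e, Sum.Lex.inr_lt_inr_iff.2 h⟩

variable {F G}

def sumEnd (g : Monoid.End (FreeMonoid α)) (h : Monoid.End (FreeMonoid β)) :
    Monoid.End (FreeMonoid (Glue F G)) :=
  FreeMonoid.lift fun
    | inl x _ => map (ofLeft F G) (g (of x))
    | inr y _ => map (ofRight F G) (h (of y))
    | last => 1

variable {g : Monoid.End (FreeMonoid α)} {h : Monoid.End (FreeMonoid β)}

theorem sumEnd_of_ofLeft (hg : g (of F.last) = 1) (x : α) :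
    sumEnd g h (of (ofLeft F G x)) = map (ofLeft F G) (g (of x)) := by
  by_cases hx : x = F.last
  · subst hx
    rw [hg, map_one, ofLeft_last]
    rfl
  · rw [ofLeft, dif_neg hx]
    rfl

theorem sumEnd_of_ofRight (hh : h (of G.last) = 1) (y : β) :
    sumEnd g h (of (ofRight F G y)) = map (ofRight F G) (h (of y)) := by
  by_cases hy : y = G.last
  · subst hy
    rw [hh, map_one, ofRight_last]
    rfl
  · rw [ofRight, dif_neg hy]
    rfl

theorem semiconj_ofLeft (hg : g (of F.last) = 1) :
    Function.Semiconj (map (ofLeft F G)) g (sumEnd g h) :=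
  DFunLike.congr_fun (hom_eq (f := (map (ofLeft F G)).comp (g : FreeMonoid α →* FreeMonoid α))
    (g := (sumEnd g h : FreeMonoid (Glue F G) →* _).comp (map (ofLeft F G)))
    fun x => (sumEnd_of_ofLeft hg x).symm)

theorem semiconj_ofRight (hh : h (of G.last) = 1) :
    Function.Semiconj (map (ofRight F G)) h (sumEnd g h) :=
  DFunLike.congr_fun (hom_eq (f := (map (ofRight F G)).comp (h : FreeMonoid β →* FreeMonoid β))
    (g := (sumEnd g h : FreeMonoid (Glue F G) →* _).comp (map (ofRight F G)))
    fun y => (sumEnd_of_ofRight hh y).symm)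

theorem forall_mem_sumEnd (hg : g (of F.last) = 1) (hh : h (of G.last) = 1)
    {P : Glue F G → Glue F G → Prop}
    (left : ∀ x, ∀ z ∈ toList (g (of x)), P (ofLeft F G x) (ofLeft F G z))
    (right : ∀ y, ∀ z ∈ toList (h (of y)), P (ofRight F G y) (ofRight F G z)) :
    ∀ c, ∀ d ∈ toList (sumEnd g h (of c)), P c d := by
  intro c
  induction c using induction with
  | left x =>
    rw [sumEnd_of_ofLeft hg, toList_map]
    simpa using left x
  | right y =>
    rw [sumEnd_of_ofRight hh, toList_map]
    simpa using right y

theorem isUpperTriangular_sumEnd (hg : g (of F.last) = 1) (hh : h (of G.last) = 1)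
    (hg' : IsUpperTriangular g) (hh' : IsUpperTriangular h) :
    IsUpperTriangular (sumEnd (F := F) (G := G) g h) := fun c d hdc hd =>
  forall_mem_sumEnd (P := fun c d => ¬ d < c) hg hh
    (fun x z hz hzx => hg' x z ((strictMono_ofLeft F G).lt_iff_lt.1 hzx) hz)
    (fun y z hz hzy => hh' y z ((strictMono_ofRight F G).lt_iff_lt.1 hzy) hz) c d hd hdc

theorem sumEnd_sumEnd_ofLeft (hg : g (of F.last) = 1) (x : α) :
    sumEnd g h (sumEnd g h (of (ofLeft F G x))) = map (ofLeft F G) (g (g (of x))) := by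
  rw [← map_of, ← (semiconj_ofLeft hg).eq, ← (semiconj_ofLeft hg).eq]

theorem sumEnd_sumEnd_ofRight (hh : h (of G.last) = 1) (y : β) :
    sumEnd g h (sumEnd g h (of (ofRight F G y))) = map (ofRight F G) (h (h (of y))) := by
  rw [← map_of, ← (semiconj_ofRight hh).eq, ← (semiconj_ofRight hh).eq]

end Glue

open Glue in
def glue (F : MTriple t α) (G : MTriple t β) : MTriple t (Glue F G) where
  g1 := sumEnd F.g1 G.g1
  g2 := sumEnd F.g2 G.g2
  lvl := Glue.lvl
  lvl_mono _ _ h := Prod.Lex.monotone_fst _ _ h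
  lvl_le c := by
    induction c using Glue.induction with
    | left x => simpa [lvl_ofLeft] using F.lvl_le x
    | right y => simpa [lvl_ofRight] using G.lvl_le y
  lvl_surj i hi :=
    let ⟨x, hx⟩ := F.lvl_surj i hi
    ⟨ofLeft F G x, (lvl_ofLeft F G x).trans hx⟩
  tri_g1 := isUpperTriangular_sumEnd F.g1_last G.g1_last F.tri_g1 G.tri_g1
  tri_g2 := isUpperTriangular_sumEnd F.g2_last G.g2_last F.tri_g2 G.tri_g2
  last := Glue.last
  last_top c := by
    induction c using Glue.induction with
    | left x => exact ofLeft_last F G ▸ (strictMono_ofLeft F G).monotone (F.last_top x)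
    | right y => exact ofRight_last F G ▸ (strictMono_ofRight F G).monotone (G.last_top y)
  lvl_last c := by
    induction c using Glue.induction with
    | left x =>
      rw [lvl_ofLeft, F.lvl_last, ← ofLeft_last F G, (strictMono_ofLeft F G).injective.eq_iff]
    | right y =>
      rw [lvl_ofRight, G.lvl_last, ← ofRight_last F G, (strictMono_ofRight F G).injective.eq_iff]
  g1_lvl := forall_mem_sumEnd F.g1_last G.g1_last
    (fun x z hz => by simp only [lvl_ofLeft, F.g1_lvl x z hz])
    (fun y z hz => by simp only [lvl_ofRight, G.g1_lvl y z hz])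
  g2_lvl c hc d hd := forall_mem_sumEnd (P := fun c d => c.lvl < t → d.lvl = c.lvl + 1)
    F.g2_last G.g2_last
    (fun x z hz hx => by simp only [lvl_ofLeft] at hx ⊢; exact F.g2_lvl x hx z hz)
    (fun y z hz hy => by simp only [lvl_ofRight] at hy ⊢; exact G.g2_lvl y hy z hz) c d hd hc
  g2_sq c := by
    induction c using Glue.induction with
    | left x => rw [sumEnd_sumEnd_ofLeft F.g2_last, F.g2_sq, map_one]
    | right y => rw [sumEnd_sumEnd_ofRight G.g2_last, G.g2_sq, map_one]
  g1_last := rfl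
  g2_last := rfl

theorem semiconj_glue_run_ofLeft (F : MTriple t α) (G : MTriple t β) (n : Fin t → ℕ) :
    Function.Semiconj (map (Glue.ofLeft F G)) (F.run n) ((F.glue G).run n) :=
  semiconj_run (Glue.semiconj_ofLeft F.g1_last) (Glue.semiconj_ofLeft F.g2_last) n

theorem semiconj_glue_run_ofRight (F : MTriple t α) (G : MTriple t β) (n : Fin t → ℕ) :
    Function.Semiconj (map (Glue.ofRight F G)) (G.run n) ((F.glue G).run n) :=
  semiconj_run (Glue.semiconj_ofRight G.g1_last) (Glue.semiconj_ofRight G.g2_last) n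

def congr (T : MTriple t α) (e : α ≃o γ) : MTriple t γ where
  g1 := endCongr e.toEquiv T.g1
  g2 := endCongr e.toEquiv T.g2
  lvl := T.lvl ∘ e.symm
  lvl_mono := T.lvl_mono.comp e.symm.monotone
  lvl_le c := T.lvl_le _
  lvl_surj i hi :=
    let ⟨x, hx⟩ := T.lvl_surj i hi
    ⟨e x, by simpa using hx⟩
  tri_g1 c d hdc hd := T.tri_g1 _ _ (e.symm.lt_iff_lt.2 hdc) ((mem_toList_endCongr_of _ _).1 hd)
  tri_g2 c d hdc hd := T.tri_g2 _ _ (e.symm.lt_iff_lt.2 hdc) ((mem_toList_endCongr_of _ _).1 hd)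
  last := e T.last
  last_top c := e.symm_apply_le.1 (T.last_top _)
  lvl_last c := (T.lvl_last _).trans e.symm_apply_eq
  g1_lvl c d hd := T.g1_lvl _ _ ((mem_toList_endCongr_of _ _).1 hd)
  g2_lvl c hc d hd := T.g2_lvl _ hc _ ((mem_toList_endCongr_of _ _).1 hd)
  g2_sq c := by
    rw [← e.apply_symm_apply c]
    change endCongr e.toEquiv T.g2 (endCongr e.toEquiv T.g2 (map e.toEquiv (of (e.symm c)))) = 1
    rw [← semiconj_endCongr, ← semiconj_endCongr, T.g2_sq, map_one]
  g1_last := by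
    change map e.toEquiv (T.g1 (of (e.symm (e T.last)))) = 1
    rw [e.symm_apply_apply, T.g1_last, map_one]
  g2_last := by
    change map e.toEquiv (T.g2 (of (e.symm (e T.last)))) = 1
    rw [e.symm_apply_apply, T.g2_last, map_one]

end MTriple

namespace ComputableBy

open MTriple

variable {t : ℕ} {α β γ : Type} [Fintype α] [LinearOrder α] [Fintype β] [LinearOrder β]
  [Fintype γ] [LinearOrder γ]

theorem congr {T : MTriple t α} {f : (Fin t → ℕ) → ℕ} (hf : ComputableBy T f)
    (e : α ≃o γ) : ComputableBy (T.congr e) f := by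
  obtain ⟨w, hw0, hw⟩ := hf
  refine ⟨map e.toEquiv w, fun d hd => ?_, fun n hn => ?_⟩
  · rw [toList_map, List.mem_map] at hd
    obtain ⟨x, hx, rfl⟩ := hd
    simpa [MTriple.congr] using hw0 x hx
  · rw [← run_apply, ← (semiconj_run (semiconj_endCongr _ _) (semiconj_endCongr _ _) n).eq,
      run_apply, hw n hn, map_pow, map_of]
    rfl

theorem glue {F : MTriple t α} {G : MTriple t β} {p q : (Fin t → ℕ) → ℕ}
    (hp : ComputableBy F p) (hq : ComputableBy G q) (a b : ℕ) :
    ComputableBy (F.glue G) fun n => a * p n + b * q n := by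
  obtain ⟨u, hu0, hu⟩ := hp
  obtain ⟨v, hv0, hv⟩ := hq
  refine ⟨map (Glue.ofLeft F G) u ^ a * map (Glue.ofRight F G) v ^ b, fun d hd => ?_,
    fun n hn => ?_⟩
  · rw [toList_mul, List.mem_append] at hd
    rcases hd with hd | hd
    · obtain ⟨x, hx, rfl⟩ := List.mem_map.1 (mem_toList_of_mem_toList_pow hd)
      exact (Glue.lvl_ofLeft F G x).trans (hu0 x hx)
    · obtain ⟨y, hy, rfl⟩ := List.mem_map.1 (mem_toList_of_mem_toList_pow hd)
      exact (Glue.lvl_ofRight F G y).trans (hv0 y hy)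
  · rw [← run_apply, map_mul, map_pow, map_pow, ← (semiconj_glue_run_ofLeft F G n).eq,
      ← (semiconj_glue_run_ofRight F G n).eq, run_apply, run_apply, hu n hn, hv n hn, map_pow,
      map_pow, map_of, map_of, Glue.ofLeft_last, Glue.ofRight_last, ← pow_mul, ← pow_mul,
      ← pow_add, mul_comm (p n), mul_comm (q n)]
    rfl

end ComputableBy

theorem statement3_general (t : ℕ)
    (α β : Type) [Fintype α] [LinearOrder α] [Fintype β] [LinearOrder β]
    (F : MTriple t α) (G : MTriple t β)
    (p q : (Fin t → ℕ) → ℕ)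
    (hp : ComputableBy F p) (hq : ComputableBy G q)
    (a b : ℕ) :
    ∃ (m : ℕ) (T : MTriple t (Fin m)),
      ComputableBy T (fun n => a * p n + b * q n) :=
  ⟨_, _, (hp.glue hq a b).congr (Fintype.orderIsoFinOfCardEq _ rfl).symm⟩

/-- positive ℕ-linear combinations of maps computable by M-triples of
the same dimension (over disjoint alphabets, modelled here by two distinct alphabet
types) are computable by an M-triple. -/
theorem statement3 (t : ℕ) (ht : 0 < t)
    (α β : Type) [Fintype α] [LinearOrder α] [Fintype β] [LinearOrder β]
    (F : MTriple t α) (G : MTriple t β)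
    (p q : (Fin t → ℕ) → ℕ)
    (hp_pos : ∀ n : Fin t → ℕ, (∀ i, 0 < n i) → 0 < p n)
    (hq_pos : ∀ n : Fin t → ℕ, (∀ i, 0 < n i) → 0 < q n)
    (hp : ComputableBy F p) (hq : ComputableBy G q)
    (a b : ℕ) (ha : 0 < a) (hb : 0 < b) :
    ∃ (m : ℕ) (T : MTriple t (Fin m)),
      ComputableBy T (fun n => a * p n + b * q n) :=
  statement3_general t α β F G p q hp hq a b
end

section
/- Let t ≥ 2 be an integer and let p(x1,…,xt) and q(x1,…,xt) be polynomials with nonnegative integer coefficients taking positive values on positive integer arguments. Then there exist a positive integer k and upper triangular k×k matrices M1, M2 with nonnegative integer entries such that, writing M for the multiplicative submonoid of the k×k matrices generated by M1 and M2, O for the zero matrix, and Mprod(n1,…,nα) = M1^{n1} M2 M1^{n2} M2 ⋯ M1^{nα} M2, for all positive integers n and s the following three conditions are equivalent: (i) there exist positive integers n3,…,nt with p(n,s,n3,…,nt) = q(n,s,n3,…,nt); (ii) there exists a matrix N ∈ M with M2² Mprod(n,s) N = M2³ Mprod(n,s) N ≠ O; (iii) there exist matrices N1, N2 ∈ M with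 M2² Mprod(n,s) N1 = M2³ Mprod(n,s) N2 ≠ O. -/
/-!
Write `p = ∑_J ∏ᵢ C(xᵢ - 1, Jᵢ)` and `q` likewise on positive arguments, with multiplicities.
The matrices are the transition matrices of a weighted automaton with, for every term `J` and
variable `i`, a chain of states of heights `0, 1, …`: `M1` climbs a chain, staying or moving up
one step, so that `M1^x` carries its bottom to height `j + 1` in `C(x - 1, j)` ways, and `M2`
leaves the chain only from height `Jᵢ + 1`, to the bottom of chain `i + 1` or, after the last
variable, to a sink. Reading `M1^x₁ M2 ⋯ M1^xₜ M2` from the start state of `p` (resp. `q`) thus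
reaches the sink with weight `p(x)` (resp. `q(x)`).

Two head states make row `head0` of `M2²` (resp. `M2³`) the start row of `p` (resp. `q`), while
all other rows of `M2²` and `M2³` agree; so `M2² X = M2³ Y` equates the start row of `p` in `X`
with that of `q` in `Y`. After a first letter `M1` each start row is supported on its own
terms and the sink, so equal start rows are multiples of the sink vector, and only words of the
exact shape above reach the sink. Ordering states by (variable, height) makes both matrices
upper triangular.
-/

/-- A square matrix over ℕ is upper triangular if every entry below the diagonal is zero. -/
def MatrixUpperTriangular {k : ℕ} (M : Matrix (Fin k) (Fin k) ℕ) : Prop :=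
  ∀ i j : Fin k, j < i → M i j = 0

open Matrix

section BinomialBasis

theorem Nat.add_one_mul_choose_eq_mul_add (y j : ℕ) :
    (y + 1) * y.choose j = (j + 1) * (y.choose j + y.choose (j + 1)) := by
  rw [Nat.add_one_mul_choose_eq, Nat.choose_succ_succ]; ring

variable {σ : Type*} [Fintype σ] [DecidableEq σ]

def chooseProd (x J : σ → ℕ) : ℕ := ∏ i, (x i - 1).choose (J i)

theorem chooseProd_mul_apply (x J : σ → ℕ) (i : σ) (hx : 0 < x i) :
    chooseProd x J * x i =
      (J i + 1) * chooseProd x J + (J i + 1) * chooseProd x (Function.update J i (J i + 1)) := by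
  obtain ⟨y, hy⟩ : ∃ y, x i = y + 1 := ⟨x i - 1, by omega⟩
  have hsplit : ∀ K : σ → ℕ, chooseProd x K = (x i - 1).choose (K i) *
      ∏ k ∈ Finset.univ.erase i, (x k - 1).choose (K k) := fun K =>
    (Finset.mul_prod_erase _ (fun k => (x k - 1).choose (K k)) (Finset.mem_univ i)).symm
  have hrest : ∏ k ∈ Finset.univ.erase i, (x k - 1).choose (Function.update J i (J i + 1) k) =
      ∏ k ∈ Finset.univ.erase i, (x k - 1).choose (J k) :=
    Finset.prod_congr rfl fun k hk => by rw [Function.update_of_ne (Finset.ne_of_mem_erase hk)]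
  rw [hsplit, hsplit (Function.update J i _), hrest, Function.update_self, hy, Nat.add_sub_cancel,
    mul_right_comm, mul_comm _ (y + 1), Nat.add_one_mul_choose_eq_mul_add]
  ring

theorem MvPolynomial.exists_multiset_eval_eq_sum_chooseProd (p : MvPolynomial σ ℕ) :
    ∃ S : Multiset (σ → ℕ), ∀ x : σ → ℕ, (∀ i, 0 < x i) →
      MvPolynomial.eval x p = (S.map (chooseProd x)).sum := by
  induction p using MvPolynomial.induction_on with
  | C a => exact ⟨Multiset.replicate a 0, fun x _ => by simp [chooseProd]⟩
  | add p q hp hq =>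
    obtain ⟨S, hS⟩ := hp
    obtain ⟨T, hT⟩ := hq
    exact ⟨S + T, fun x hx => by simp [hS x hx, hT x hx]⟩
  | mul_X p i hp =>
    obtain ⟨S, hS⟩ := hp
    refine ⟨S.bind fun J => Multiset.replicate (J i + 1) J +
      Multiset.replicate (J i + 1) (Function.update J i (J i + 1)), fun x hx => ?_⟩
    rw [map_mul, MvPolynomial.eval_X, hS x hx, ← Multiset.sum_map_mul_right, Multiset.map_bind,
      Multiset.sum_bind]
    congr 1
    refine Multiset.map_congr rfl fun J _ => ?_
    simp only [chooseProd_mul_apply x J i (hx i), Multiset.map_add, Multiset.map_replicate,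
      Multiset.sum_add, Multiset.sum_replicate, smul_eq_mul]

end BinomialBasis

section Words

variable {M : Type*} [Monoid M] (A B : M)

def word (L : List ℕ) : M := (L.map fun a => A ^ a * B).prod

@[simp] theorem word_nil : word A B [] = 1 := rfl

@[simp] theorem word_cons (a : ℕ) (L : List ℕ) :
    word A B (a :: L) = A ^ a * B * word A B L := rfl

theorem word_append (L L' : List ℕ) : word A B (L ++ L') = word A B L * word A B L' := by
  simp [word]

theorem word_replicate_zero (j : ℕ) : word A B (List.replicate j 0) = B ^ j := by
  simp [word]

theorem word_mem_closure (L : List ℕ) : word A B L ∈ Submonoid.closure {A, B} := by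
  induction L with
  | nil => exact Submonoid.one_mem _
  | cons a L ih =>
    exact Submonoid.mul_mem _ (Submonoid.mul_mem _
      (Submonoid.pow_mem _ (Submonoid.subset_closure (by simp)) a)
      (Submonoid.subset_closure (by simp))) ih

theorem exists_word_of_mem_closure {N : M} (hN : N ∈ Submonoid.closure {A, B}) :
    ∃ L r, N = word A B L * A ^ r := by
  induction hN using Submonoid.closure_induction_left with
  | one => exact ⟨[], 0, by simp⟩
  | mul_left x hx y _ ih =>
    obtain ⟨L, r, rfl⟩ := ih
    rcases hx with rfl | rfl
    · cases L with
      | nil => exact ⟨[], r + 1, by simp [pow_succ']⟩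
      | cons a L => exact ⟨(a + 1) :: L, r, by simp [pow_succ', mul_assoc]⟩
    · exact ⟨0 :: L, r, by simp [mul_assoc]⟩

theorem exists_mul_eq_word_cons_add_one_mul (a : ℕ) (L : List ℕ) {N : M}
    (hN : N ∈ Submonoid.closure {A, B}) :
    ∃ Z ∈ Submonoid.closure {A, B}, word A B ((a + 1) :: L) * N = A * Z :=
  ⟨A ^ a * B * word A B L * N, Submonoid.mul_mem _ (Submonoid.mul_mem _ (Submonoid.mul_mem _
    (Submonoid.pow_mem _ (Submonoid.subset_closure (by simp)) a)
    (Submonoid.subset_closure (by simp))) (word_mem_closure A B L)) hN,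
    by simp [pow_succ', mul_assoc]⟩

theorem pow_mul_eq_pow_mul_word_mul (c n s : ℕ) (N : M) :
    B ^ c * A ^ n * B * A ^ s * B * N = B ^ c * (word A B [n, s] * N) := by
  simp [mul_assoc]

end Words

section Solvability

variable {R S : Type*} [MonoidWithZero R] [MonoidWithZero S]

def SolvableSame (A B : R) (n s : ℕ) : Prop :=
  ∃ N ∈ Submonoid.closure ({A, B} : Set R),
    B ^ 2 * A ^ n * B * A ^ s * B * N = B ^ 3 * A ^ n * B * A ^ s * B * N ∧
    B ^ 2 * A ^ n * B * A ^ s * B * N ≠ 0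

def SolvablePair (A B : R) (n s : ℕ) : Prop :=
  ∃ N₁ ∈ Submonoid.closure ({A, B} : Set R), ∃ N₂ ∈ Submonoid.closure ({A, B} : Set R),
    B ^ 2 * A ^ n * B * A ^ s * B * N₁ = B ^ 3 * A ^ n * B * A ^ s * B * N₂ ∧
    B ^ 2 * A ^ n * B * A ^ s * B * N₁ ≠ 0

theorem SolvableSame.solvablePair {A B : R} {n s : ℕ} (h : SolvableSame A B n s) :
    SolvablePair A B n s :=
  let ⟨N, hN, heq, hne⟩ := h
  ⟨N, hN, N, hN, heq, hne⟩

theorem exists_mem_closure_pair_map_iff (f : R ≃* S) (A B : R) (P : S → Prop) :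
    (∃ N ∈ Submonoid.closure ({f A, f B} : Set S), P N) ↔
      ∃ N ∈ Submonoid.closure ({A, B} : Set R), P (f N) := by
  rw [← Set.image_pair, ← MonoidHom.map_mclosure f]
  constructor
  · rintro ⟨_, ⟨N, hN, rfl⟩, hP⟩
    exact ⟨N, hN, hP⟩
  · rintro ⟨N, hN, hP⟩
    exact ⟨f N, ⟨N, hN, rfl⟩, hP⟩

theorem solvableSame_map_iff (f : R ≃* S) (A B : R) (n s : ℕ) :
    SolvableSame (f A) (f B) n s ↔ SolvableSame A B n s := by
  simp only [SolvableSame, exists_mem_closure_pair_map_iff, ← map_pow, ← map_mul,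
    f.injective.eq_iff, ne_eq, map_eq_zero_iff f f.injective]

theorem solvablePair_map_iff (f : R ≃* S) (A B : R) (n s : ℕ) :
    SolvablePair (f A) (f B) n s ↔ SolvablePair A B n s := by
  simp only [SolvablePair, exists_mem_closure_pair_map_iff, ← map_pow, ← map_mul,
    f.injective.eq_iff, ne_eq, map_eq_zero_iff f f.injective]

end Solvability

section ClosedSets

variable {α R : Type*} [Fintype α] [Semiring R]

def IsClosedUnder (S : Set α) (M : Matrix α α R) : Prop := ∀ x ∈ S, ∀ y ∉ S, M x y = 0

theorem IsClosedUnder.vecMul {S : Set α} {M : Matrix α α R} (hM : IsClosedUnder S M)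
    {v : α → R} (hv : ∀ y ∉ S, v y = 0) : ∀ y ∉ S, (v ᵥ* M) y = 0 := fun y hy =>
  Finset.sum_eq_zero fun z _ => by
    dsimp only
    by_cases hz : z ∈ S
    · rw [hM z hz y hy, mul_zero]
    · rw [hv z hz, zero_mul]

theorem vecMul_eq_smul_row_of_forall_ne {v : α → R} {B : Matrix α α R} (z : α)
    (h : ∀ y ≠ z, v y = 0 ∨ B y = 0) : v ᵥ* B = v z • B z := by
  ext j
  simp only [Matrix.vecMul, dotProduct, Pi.smul_apply, smul_eq_mul]
  refine Finset.sum_eq_single z (fun y _ hy => ?_) (by simp)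
  rcases h y hy with h | h <;> simp [h]

variable [DecidableEq α]

def closedUnderSubmonoid (S : Set α) : Submonoid (Matrix α α R) where
  carrier := {M | IsClosedUnder S M}
  one_mem' x hx y hy := Matrix.one_apply_ne (by rintro rfl; exact hy hx)
  mul_mem' {M N} hM hN x hx y hy := Finset.sum_eq_zero fun z _ => by
    dsimp only
    by_cases hz : z ∈ S
    · rw [hN z hz y hy, mul_zero]
    · rw [hM x hx z hz, zero_mul]

theorem IsClosedUnder.of_mem_closure {S : Set α} {s : Set (Matrix α α R)}
    (h : ∀ A ∈ s, IsClosedUnder S A) {N : Matrix α α R} (hN : N ∈ Submonoid.closure s) :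
    IsClosedUnder S N :=
  (Submonoid.closure_le (S := closedUnderSubmonoid S).mpr h) hN

theorem IsClosedUnder.pow {S : Set α} {M : Matrix α α R} (hM : IsClosedUnder S M) (a : ℕ) :
    IsClosedUnder S (M ^ a) :=
  Submonoid.pow_mem (closedUnderSubmonoid S) hM a

end ClosedSets

theorem exists_equiv_fin_upperTriangular {α β : Type*} [Fintype α] [LinearOrder β]
    (f : α → β) :
    ∃ e : α ≃ Fin (Fintype.card α), ∀ M : Matrix α α ℕ,
      (∀ x y, M x y ≠ 0 → x = y ∨ f x < f y) → MatrixUpperTriangular (reindex e e M) := by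
  let e₀ := Fintype.equivFin α
  let σ := Tuple.sort (f ∘ e₀.symm)
  refine ⟨e₀.trans σ.symm, fun M hM i j hji => ?_⟩
  have hmono := Tuple.monotone_sort (f ∘ e₀.symm) hji.le
  by_contra hne
  rcases hM _ _ hne with heq | hlt
  · exact hji.ne (by simpa using heq.symm)
  · exact absurd hmono (not_le.mpr (by simpa [σ] using hlt))

theorem Nat.mul_add_lt_mul_of_lt {c i i' m : ℕ} (h : i < i') (hm : m < c) :
    c * i + m < c * i' := by
  have := Nat.mul_le_mul_left c (Nat.succ_le_of_lt h)
  rw [Nat.mul_succ] at this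
  omega

theorem List.exists_ofFn_iff_exists_cons_cons {t : ℕ} (ht : 2 ≤ t) (n s : ℕ)
    (P : List ℕ → Prop) :
    (∃ m : Fin t → ℕ, (∀ i, 0 < m i) ∧ m ⟨0, Nat.zero_lt_two.trans_le ht⟩ = n ∧
        m ⟨1, Nat.one_lt_two.trans_le ht⟩ = s ∧ P (List.ofFn m)) ↔
      ∃ y, (n :: s :: y).length = t ∧ (∀ a ∈ n :: s :: y, 0 < a) ∧ P (n :: s :: y) := by
  constructor
  · rintro ⟨m, hm, rfl, rfl, hP⟩
    obtain ⟨t, rfl⟩ := Nat.exists_eq_add_of_le' ht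
    rw [List.ofFn_succ, List.ofFn_succ] at hP
    refine ⟨List.ofFn fun i => m i.succ.succ, by simp, ?_, hP⟩
    simpa [List.mem_ofFn] using ⟨hm 0, hm 1, fun i => hm _⟩
  · rintro ⟨y, rfl, hpos, hP⟩
    exact ⟨fun i => (n :: s :: y)[i.1], fun i => hpos _ (List.getElem_mem _), rfl, rfl,
      by rwa [List.ofFn_getElem]⟩

theorem List.exists_eq_cons_cons_of_cons_cons_eq_append {a b : ℕ} {L x l : List ℕ}
    (hx : 2 ≤ x.length) (h : a :: b :: L = x ++ l) : ∃ y, x = a :: b :: y := by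
  rcases x with _ | ⟨a', _ | ⟨b', y⟩⟩
  · simp at hx
  · simp at hx
  · obtain ⟨rfl, rfl, -⟩ : a = a' ∧ b = b' ∧ _ := by simpa using h
    exact ⟨y, rfl⟩

namespace DiophantineAutomaton

/-- `node σ i m` is height `m` of the chain of variable `i` in the term `σ`; `D` bounds the
exponents. -/
inductive State (ι : Type*) (t D : ℕ) where
  | head0
  | head1
  | start (b : Bool)
  | node (σ : ι) (i : Fin t) (m : Fin (D + 2))
  | sink
  deriving DecidableEq, Fintype

open State

variable {ι : Type*} {t D : ℕ}

abbrev Mat (ι : Type*) (t D : ℕ) := Matrix (State ι t D) (State ι t D) ℕ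

def entry (σ : ι) (i : ℕ) : State ι t D := if h : i < t then node σ ⟨i, h⟩ 0 else sink

theorem entry_of_lt (σ : ι) {i : ℕ} (h : i < t) :
    (entry σ i : State ι t D) = node σ ⟨i, h⟩ 0 :=
  dif_pos h

theorem entry_of_le (σ : ι) {i : ℕ} (h : t ≤ i) : (entry σ i : State ι t D) = sink :=
  dif_neg (by omega)

theorem entry_zero [NeZero t] (σ : ι) : (entry σ 0 : State ι t D) = node σ 0 0 :=
  entry_of_lt σ (NeZero.pos t)

def rank : State ι t D → ℕ
  | head0 => 0
  | head1 => 1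
  | start true => 2
  | start false => 3
  | node _ i m => 4 + (D + 2) * i + m
  | sink => 4 + (D + 2) * t

def weight (J : ι → ℕ → ℕ) (σ : ι) : ℕ → List ℕ → ℕ
  | _, [] => 1
  | i, a :: x => (a - 1).choose (J σ i) * weight J σ (i + 1) x

theorem weight_ofFn (J : ι → ℕ → ℕ) (σ : ι) {k : ℕ} (f : Fin k → ℕ) (i : ℕ) :
    weight J σ i (List.ofFn f) = ∏ j : Fin k, (f j - 1).choose (J σ (i + j)) := by
  induction k generalizing i with
  | zero => rfl
  | succ k ih =>
    rw [List.ofFn_succ, weight, ih, Fin.prod_univ_succ]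
    simp [Nat.add_assoc, Nat.add_comm 1]

def value [Fintype ι] (side : ι → Bool) (J : ι → ℕ → ℕ) (b : Bool) (x : List ℕ) :
    ℕ :=
  ∑ σ with side σ = b, weight J σ 0 x

def sideSet (side : ι → Bool) (b : Bool) : Set (State ι t D) :=
  {y | y = sink ∨ ∃ σ i m, side σ = b ∧ y = node σ i m}

section M2

variable [DecidableEq ι] (J : ι → ℕ → ℕ)

def M2 : Mat ι t D := Matrix.of fun
  | head0 => Pi.single head1 1
  | head1 => Pi.single (start true) 1
  | start _ => Pi.single (start false) 1
  | node σ i m => if (m : ℕ) = J σ i + 1 then Pi.single (entry σ (i + 1)) 1 else 0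
  | sink => Pi.single sink 1

variable {J}

@[simp] theorem M2_head0 : (M2 J : Mat ι t D) head0 = Pi.single head1 1 := rfl

@[simp] theorem M2_head1 : (M2 J : Mat ι t D) head1 = Pi.single (start true) 1 := rfl

@[simp] theorem M2_start (b : Bool) : (M2 J : Mat ι t D) (start b) = Pi.single (start false) 1 :=
  rfl

@[simp] theorem M2_sink : (M2 J : Mat ι t D) sink = Pi.single sink 1 := rfl

theorem M2_node (σ : ι) (i : Fin t) (m : Fin (D + 2)) :
    (M2 J : Mat ι t D) (node σ i m) =
      if (m : ℕ) = J σ i + 1 then Pi.single (entry σ (i + 1)) 1 else 0 := rfl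

theorem M2_node_zero (σ : ι) (i : Fin t) : (M2 J : Mat ι t D) (node σ i 0) = 0 := by
  simp [M2_node]

theorem M2_triangular (x y : State ι t D) (h : (M2 J : Mat ι t D) x y ≠ 0) :
    x = y ∨ rank x < rank y := by
  cases x with
  | node σ i m =>
    rw [M2_node] at h
    split_ifs at h
    · obtain rfl : y = entry σ (i + 1) := by simpa [Pi.single_apply] using h
      right
      unfold entry
      split_ifs with hi
      · have := Nat.mul_add_lt_mul_of_lt (Nat.lt_add_one (i : ℕ)) m.isLt
        simp only [rank]
        omega
      · have := Nat.mul_add_lt_mul_of_lt i.isLt m.isLt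
        simp only [rank]
        omega
    · exact absurd rfl h
  | start b =>
    obtain rfl : y = start false := by simpa [Pi.single_apply] using h
    cases b <;> simp [rank]
  | _ =>
    simp only [M2_head0, M2_head1, M2_sink, Pi.single_apply, ne_eq, ite_eq_right_iff,
      one_ne_zero, imp_false, not_not] at h
    subst h
    simp [rank]

theorem isClosedUnder_sideSet_M2 {side : ι → Bool} (b : Bool) :
    IsClosedUnder (sideSet side b) (M2 J : Mat ι t D) := by
  rintro _ (rfl | ⟨σ, i, m, hσ, rfl⟩) y hy
  · simp only [sideSet, Set.mem_ofPred_eq, not_or] at hy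
    simp [Ne.symm hy.1]
  · have hentry : (entry σ (i + 1) : State ι t D) ∈ sideSet side b := by
      unfold entry
      split_ifs
      · exact Or.inr ⟨σ, _, 0, hσ, rfl⟩
      · exact Or.inl rfl
    rw [M2_node]
    split_ifs
    · exact Pi.single_eq_of_ne (fun h : y = entry σ (i + 1) => hy (h ▸ hentry)) _
    · rfl

variable [Fintype ι]

theorem single_sink_vecMul_M2_pow (j : ℕ) :
    Pi.single sink 1 ᵥ* (M2 J : Mat ι t D) ^ j = Pi.single sink 1 := by
  induction j with
  | zero => simp
  | succ j ih => rw [pow_succ, ← vecMul_vecMul, ih, single_one_vecMul, row_apply', M2_sink]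

theorem M2_sq_head0 : ((M2 J : Mat ι t D) ^ 2) head0 = Pi.single (start true) 1 := by
  simp [sq, Matrix.mul_apply_eq_vecMul, row_apply']

theorem M2_sq_head1 : ((M2 J : Mat ι t D) ^ 2) head1 = Pi.single (start false) 1 := by
  simp [sq, Matrix.mul_apply_eq_vecMul, row_apply']

theorem M2_sq_apply_of_ne_head0 {x : State ι t D} (hx : x ≠ head0) :
    (M2 J ^ 2) x = 0 ∨ (M2 J ^ 2) x = Pi.single (start false) 1 ∨
      (M2 J ^ 2) x = Pi.single sink 1 := by
  rw [sq, Matrix.mul_apply_eq_vecMul]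
  cases x with
  | head0 => exact absurd rfl hx
  | node σ i m =>
    rw [M2_node]
    split_ifs
    · by_cases hi : (i : ℕ) + 1 < t
      · simp [entry_of_lt σ hi, row_apply', M2_node_zero]
      · simp [entry_of_le σ (not_lt.mp hi), row_apply']
    · simp
  | _ => simp [row_apply']

theorem M2_cube_apply_of_ne_head0 {x : State ι t D} (hx : x ≠ head0) :
    ((M2 J : Mat ι t D) ^ 3) x = (M2 J ^ 2) x := by
  rw [pow_succ, Matrix.mul_apply_eq_vecMul]
  rcases M2_sq_apply_of_ne_head0 hx with h | h | h <;> rw [h] <;> simp [row_apply']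

theorem M2_cube_head0 : ((M2 J : Mat ι t D) ^ 3) head0 = Pi.single (start false) 1 := by
  simp [pow_succ, Matrix.mul_apply_eq_vecMul, row_apply']

/-- Rows `head0` of `M2²` and `M2³` are the two start rows; all other rows agree. -/
theorem start_vecMul_eq_of_sq_mul_eq_cube_mul {X Y : Mat ι t D}
    (h : M2 J ^ 2 * X = M2 J ^ 3 * Y) :
    Pi.single (start true) 1 ᵥ* X = Pi.single (start false) 1 ᵥ* Y ∧
      Pi.single (start false) 1 ᵥ* X = Pi.single (start false) 1 ᵥ* Y := by
  have h0 := congrFun h head0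
  have h1 := congrFun h head1
  rw [Matrix.mul_apply_eq_vecMul, Matrix.mul_apply_eq_vecMul] at h0 h1
  rw [M2_sq_head0, M2_cube_head0] at h0
  rw [M2_cube_apply_of_ne_head0 (by simp), M2_sq_head1] at h1
  exact ⟨h0, h1⟩

theorem sq_mul_eq_cube_mul_of_start_vecMul_eq {X : Mat ι t D}
    (h : Pi.single (start true) 1 ᵥ* X = Pi.single (start false) 1 ᵥ* X) :
    M2 J ^ 2 * X = M2 J ^ 3 * X := by
  funext x
  rw [Matrix.mul_apply_eq_vecMul, Matrix.mul_apply_eq_vecMul]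
  by_cases hx : x = head0
  · rw [hx, M2_sq_head0, M2_cube_head0, h]
  · rw [M2_cube_apply_of_ne_head0 hx]

theorem sq_mul_eq_zero_of_vecMul_eq_zero {X : Mat ι t D}
    (htrue : Pi.single (start true) 1 ᵥ* X = 0) (hfalse : Pi.single (start false) 1 ᵥ* X = 0)
    (hsink : Pi.single sink 1 ᵥ* X = 0) : M2 J ^ 2 * X = 0 := by
  funext x
  rw [Matrix.mul_apply_eq_vecMul]
  by_cases hx : x = head0
  · rw [hx, M2_sq_head0, htrue]; rfl
  · rcases M2_sq_apply_of_ne_head0 hx with h | h | h <;> rw [h]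
    · exact zero_vecMul _
    · rw [hfalse]; rfl
    · rw [hsink]; rfl

end M2

section M1

variable [DecidableEq ι] [Fintype ι] [NeZero t] (side : ι → Bool)

def M1 : Mat ι t D := Matrix.of fun
  | start b => ∑ σ with side σ = b, Pi.single (node σ 0 1) 1
  | node σ i m =>
    if m = 0 then Pi.single (node σ i 1) 1
    else Pi.single (node σ i m) 1 +
      if h : (m : ℕ) + 1 < D + 2 then Pi.single (node σ i ⟨m + 1, h⟩) 1 else 0
  | _ => 0

variable {side}

theorem M1_start (b : Bool) :
    (M1 side : Mat ι t D) (start b) = ∑ σ with side σ = b, Pi.single (node σ 0 1) 1 := rfl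

theorem M1_node_zero (σ : ι) (i : Fin t) :
    (M1 side : Mat ι t D) (node σ i 0) = Pi.single (node σ i 1) 1 := rfl

theorem M1_node_of_ne_zero (σ : ι) (i : Fin t) {m : Fin (D + 2)} (hm : m ≠ 0) :
    (M1 side : Mat ι t D) (node σ i m) = Pi.single (node σ i m) 1 +
      if h : (m : ℕ) + 1 < D + 2 then Pi.single (node σ i ⟨m + 1, h⟩) 1 else 0 :=
  if_neg hm

theorem M1_sink : (M1 side : Mat ι t D) sink = 0 := rfl

theorem M1_triangular (x y : State ι t D) (h : (M1 side : Mat ι t D) x y ≠ 0) :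
    x = y ∨ rank x < rank y := by
  cases x with
  | start b =>
    rw [M1_start, Finset.sum_apply] at h
    obtain ⟨σ, -, hσ⟩ := Finset.exists_ne_zero_of_sum_ne_zero h
    obtain rfl : y = node σ 0 1 := by simpa [Pi.single_apply] using hσ
    cases b <;> simp [rank]
  | node σ i m =>
    simp only [M1, Matrix.of_apply] at h
    split_ifs at h with hm hD
    · obtain rfl : y = node σ i 1 := by simpa [Pi.single_apply] using h
      simp [rank, hm]
    · by_cases h1 : y = node σ i m
      · exact Or.inl h1.symm
      by_cases h2 : y = node σ i ⟨m + 1, hD⟩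
      · subst h2; simp [rank]
      · simp [h1, h2] at h
    · by_cases h1 : y = node σ i m
      · exact Or.inl h1.symm
      · simp [h1] at h
  | _ => exact absurd rfl h

theorem isClosedUnder_chain_M1 (σ : ι) (i : Fin t) :
    IsClosedUnder {y | ∃ m, y = node σ i m} (M1 side : Mat ι t D) := by
  rintro _ ⟨m, rfl⟩ y hy
  simp only [Set.mem_ofPred_eq, not_exists] at hy
  simp only [M1, Matrix.of_apply]
  split_ifs <;> simp [Ne.symm (hy _)]

theorem isClosedUnder_sideSet_M1 (b : Bool) :
    IsClosedUnder (sideSet side b) (M1 side : Mat ι t D) := by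
  rintro _ (rfl | ⟨σ, i, m, hσ, rfl⟩) y hy
  · rfl
  · simp only [sideSet, Set.mem_ofPred_eq, not_or, not_exists, not_and] at hy
    simp only [M1, Matrix.of_apply]
    split_ifs <;> simp [Ne.symm (hy.2 σ _ _ hσ)]

/-- A path of length `a` climbs `m' - m` of its `a` steps and stays at the others. -/
theorem M1_pow_node_node (σ : ι) (i : Fin t) (a : ℕ) {m : Fin (D + 2)} (hm : 1 ≤ (m : ℕ))
    (m' : Fin (D + 2)) :
    ((M1 side : Mat ι t D) ^ a) (node σ i m) (node σ i m') =
      if (m : ℕ) ≤ m' then a.choose (m' - m) else 0 := by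
  induction a generalizing m with
  | zero =>
    rcases lt_trichotomy (m : ℕ) m' with h | h | h
    · simp [h.le, Nat.choose_eq_zero_of_lt (Nat.sub_pos_of_lt h),
        Fin.ne_of_lt (Fin.lt_def.mpr h)]
    · simp [Fin.ext h]
    · simp [Fin.ne_of_gt (Fin.lt_def.mpr h), h.not_ge]
  | succ a ih =>
    rw [pow_succ', Matrix.mul_apply_eq_vecMul,
      M1_node_of_ne_zero σ i (Fin.pos_iff_ne_zero.mp hm), add_vecMul, Pi.add_apply,
      single_one_vecMul, row_apply', ih hm]
    by_cases hD : (m : ℕ) + 1 < D + 2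
    · rw [dif_pos hD, single_one_vecMul, row_apply', ih (m := ⟨m + 1, hD⟩) (by simp)]
      simp only
      rcases lt_trichotomy (m : ℕ) m' with h | h | h
      · obtain ⟨d, hd⟩ : ∃ d, (m' : ℕ) - m = d + 1 := ⟨m' - m - 1, by omega⟩
        rw [if_pos h.le, if_pos (show (m : ℕ) + 1 ≤ m' by omega), if_pos h.le, hd,
          show (m' : ℕ) - (m + 1) = d by omega, Nat.choose_succ_succ', add_comm]
      · simp [h]
      · simp [h.not_ge, show ¬ (m : ℕ) + 1 ≤ m' by omega]
    · rw [dif_neg hD, zero_vecMul, Pi.zero_apply, add_zero]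
      rcases (show (m' : ℕ) ≤ m by omega).eq_or_lt with h | h
      · simp [h]
      · simp [h.not_ge]

end M1

section Automaton

variable [DecidableEq ι] [Fintype ι] [NeZero t] {side : ι → Bool} {J : ι → ℕ → ℕ}

theorem single_sink_vecMul_M1_mul (Z : Mat ι t D) :
    Pi.single sink 1 ᵥ* (M1 side * Z) = 0 := by
  rw [← vecMul_vecMul, single_one_vecMul, row_apply', M1_sink, zero_vecMul]

/-- `M2` vanishes on the chain `(σ, i)` except at height `J σ i + 1`. -/
theorem single_node_vecMul_M1_pow_mul_M2 (hJD : ∀ σ (i : Fin t), J σ i ≤ D) (σ : ι)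
    (i : Fin t) (a : ℕ) :
    Pi.single (node σ i 0) 1 ᵥ* ((M1 side : Mat ι t D) ^ (a + 1) * M2 J) =
      a.choose (J σ i) • Pi.single (entry σ (i + 1)) 1 := by
  have hz : J σ i + 1 < D + 2 := by have := hJD σ i; omega
  rw [single_one_vecMul, row_apply', Matrix.mul_apply_eq_vecMul,
    vecMul_eq_smul_row_of_forall_ne (node σ i ⟨J σ i + 1, hz⟩)]
  · rw [pow_succ', Matrix.mul_apply_eq_vecMul, M1_node_zero, single_one_vecMul, row_apply',
      M1_pow_node_node σ i a (by simp) _, M2_node, if_pos rfl]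
    simp
  · intro y hy
    by_cases hchain : ∃ m, y = node σ i m
    · obtain ⟨m, rfl⟩ := hchain
      refine Or.inr (if_neg fun h => hy ?_)
      simp [Fin.ext_iff, h]
    · exact Or.inl ((isClosedUnder_chain_M1 σ i).pow (a + 1) _ ⟨0, rfl⟩ y hchain)

theorem single_entry_vecMul_word (hJD : ∀ σ (i : Fin t), J σ i ≤ D) (σ : ι) (x : List ℕ)
    (hx : ∀ a ∈ x, 0 < a) (i : ℕ) (hi : i + x.length = t) :
    Pi.single (entry σ i) 1 ᵥ* word (M1 side : Mat ι t D) (M2 J) x =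
      weight J σ i x • Pi.single sink 1 := by
  induction x generalizing i with
  | nil => simp [entry_of_le σ (show t ≤ i by simp at hi; omega), weight]
  | cons a x ih =>
    obtain ⟨a, rfl⟩ : ∃ a', a = a' + 1 := ⟨a - 1, by have := hx a (by simp); omega⟩
    simp only [List.length_cons] at hi
    rw [word_cons, ← vecMul_vecMul, entry_of_lt σ (by omega),
      single_node_vecMul_M1_pow_mul_M2 hJD, smul_vecMul,
      ih (fun b hb => hx b (by simp [hb])) (i + 1) (by omega), smul_smul, weight]
    simp

theorem eq_replicate_of_single_sink_vecMul_apply_ne_zero (L : List ℕ) (r : ℕ)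
    (h : (Pi.single sink 1 ᵥ* (word (M1 side : Mat ι t D) (M2 J) L * M1 side ^ r)) sink ≠ 0) :
    r = 0 ∧ L = List.replicate L.length 0 := by
  induction L with
  | nil =>
    refine ⟨Nat.eq_zero_of_not_pos fun hr => h ?_, rfl⟩
    obtain ⟨r, rfl⟩ := Nat.exists_eq_add_of_lt hr
    rw [word_nil, one_mul, pow_succ', single_sink_vecMul_M1_mul]; rfl
  | cons a L ih =>
    rw [word_cons, mul_assoc, mul_assoc] at h
    cases a with
    | zero =>
      rw [pow_zero, one_mul, ← vecMul_vecMul, single_one_vecMul, row_apply', M2_sink] at h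
      obtain ⟨hr, hL⟩ := ih h
      exact ⟨hr, by rw [hL]; simp [List.replicate_succ]⟩
    | succ a =>
      rw [pow_succ', mul_assoc, single_sink_vecMul_M1_mul] at h
      exact absurd rfl h

theorem eq_append_replicate_of_single_entry_vecMul_apply_ne_zero
    (hJD : ∀ σ (i : Fin t), J σ i ≤ D) (σ : ι) (L : List ℕ) (r i : ℕ) (hi : i < t)
    (h : (Pi.single (entry σ i) 1 ᵥ* (word (M1 side : Mat ι t D) (M2 J) L * M1 side ^ r))
      sink ≠ 0) :
    r = 0 ∧ ∃ x j, x.length = t - i ∧ (∀ a ∈ x, 0 < a) ∧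
      L = x ++ List.replicate j 0 := by
  induction L generalizing i with
  | nil =>
    rw [word_nil, one_mul, entry_of_lt σ hi, single_one_vecMul, row_apply'] at h
    exact absurd ((isClosedUnder_chain_M1 σ ⟨i, hi⟩).pow r _ ⟨0, rfl⟩ sink (by simp)) h
  | cons a L ih =>
    rw [word_cons, mul_assoc, mul_assoc, entry_of_lt σ hi] at h
    cases a with
    | zero =>
      rw [pow_zero, one_mul, ← vecMul_vecMul, single_one_vecMul, row_apply', M2_node_zero,
        zero_vecMul] at h
      exact absurd rfl h
    | succ a =>
      rw [← mul_assoc, ← vecMul_vecMul, single_node_vecMul_M1_pow_mul_M2 hJD, smul_vecMul,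
        Pi.smul_apply, smul_eq_mul] at h
      have h' := right_ne_zero_of_mul h
      by_cases hi' : i + 1 < t
      · obtain ⟨hr, x, j, hx, hxpos, rfl⟩ := ih (i + 1) hi' h'
        refine ⟨hr, (a + 1) :: x, j, by simp [hx]; omega, ?_, rfl⟩
        simpa using hxpos
      · rw [entry_of_le σ (by simpa using hi')] at h'
        obtain ⟨hr, hL⟩ := eq_replicate_of_single_sink_vecMul_apply_ne_zero L r h'
        exact ⟨hr, [a + 1], L.length, by simp; omega, by simp, by rw [hL]; simp⟩

theorem single_start_vecMul_M1_mul (b : Bool) (Z : Mat ι t D) :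
    Pi.single (start b) 1 ᵥ* (M1 side * Z) =
      ∑ σ with side σ = b, Pi.single (entry σ 0) 1 ᵥ* (M1 side * Z) := by
  rw [← vecMul_vecMul, single_one_vecMul, row_apply', M1_start, sum_vecMul]
  refine Finset.sum_congr rfl fun σ _ => ?_
  rw [entry_zero, ← vecMul_vecMul, single_one_vecMul (node σ 0 0), row_apply', M1_node_zero]

theorem single_start_vecMul_word (hJD : ∀ σ (i : Fin t), J σ i ≤ D) (b : Bool) (x : List ℕ)
    (hx : ∀ a ∈ x, 0 < a) (hlen : x.length = t) :
    Pi.single (start b) 1 ᵥ* word (M1 side : Mat ι t D) (M2 J) x =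
      value side J b x • Pi.single sink 1 := by
  obtain ⟨a, y, rfl⟩ : ∃ a y, x = a :: y :=
    List.exists_cons_of_length_pos (hlen ▸ NeZero.pos t)
  obtain ⟨a, rfl⟩ : ∃ a', a = a' + 1 := ⟨a - 1, by have := hx a (by simp); omega⟩
  have hword : word (M1 side : Mat ι t D) (M2 J) ((a + 1) :: y) =
      M1 side * (M1 side ^ a * M2 J * word (M1 side) (M2 J) y) := by
    rw [word_cons, pow_succ', mul_assoc, mul_assoc, mul_assoc]
  rw [hword, single_start_vecMul_M1_mul, value, Finset.sum_smul]
  refine Finset.sum_congr rfl fun σ _ => ?_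
  rw [← hword, single_entry_vecMul_word hJD σ _ hx 0 (by simpa using hlen)]

theorem single_start_vecMul_M1_mul_apply_of_notMem (b : Bool) {Z : Mat ι t D}
    (hZ : Z ∈ Submonoid.closure {M1 side, M2 J}) :
    ∀ y ∉ sideSet side b, (Pi.single (start b) 1 ᵥ* (M1 side * Z)) y = 0 := by
  rw [← vecMul_vecMul, single_one_vecMul, row_apply']
  refine IsClosedUnder.vecMul (IsClosedUnder.of_mem_closure ?_ hZ) fun y hy => ?_
  · rintro A (rfl | rfl)
    exacts [isClosedUnder_sideSet_M1 b, isClosedUnder_sideSet_M2 b]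
  · rw [M1_start, Finset.sum_apply]
    refine Finset.sum_eq_zero fun σ hσ => Pi.single_eq_of_ne (fun h => hy ?_) _
    exact h ▸ Or.inr ⟨σ, 0, 1, (Finset.mem_filter.mp hσ).2, rfl⟩

/-- The sink is the only state common to both sides. -/
theorem single_start_vecMul_M1_mul_eq_smul_sink {Z : Mat ι t D}
    (hZ : Z ∈ Submonoid.closure {M1 side, M2 J})
    (h : Pi.single (start true) 1 ᵥ* (M1 side * Z) =
      Pi.single (start false) 1 ᵥ* (M1 side * Z)) :
    Pi.single (start true) 1 ᵥ* (M1 side * Z) =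
      (Pi.single (start true) 1 ᵥ* (M1 side * Z)) sink • Pi.single sink 1 := by
  funext y
  by_cases hy : y = sink
  · simp [hy]
  rw [Pi.smul_apply, Pi.single_eq_of_ne hy, smul_zero]
  by_cases hyt : y ∈ sideSet side true
  · rw [h]
    refine single_start_vecMul_M1_mul_apply_of_notMem false hZ y ?_
    rintro (h' | ⟨σ', i', m', hσ', h'⟩)
    · exact hy h'
    · rcases hyt with h'' | ⟨σ, i, m, hσ, h''⟩
      · exact hy h''
      · rw [h''] at h'
        cases h'
        simp [hσ] at hσ'
  · exact single_start_vecMul_M1_mul_apply_of_notMem true hZ y hyt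

theorem single_start_vecMul_M1_mul_apply_sink_ne_zero {Z : Mat ι t D}
    (hZ : Z ∈ Submonoid.closure {M1 side, M2 J})
    (hsame : Pi.single (start true) 1 ᵥ* (M1 side * Z) =
      Pi.single (start false) 1 ᵥ* (M1 side * Z))
    (hne : M2 J ^ 2 * (M1 side * Z) ≠ 0) :
    (Pi.single (start true) 1 ᵥ* (M1 side * Z)) sink ≠ 0 ∧
      ∃ σ, (Pi.single (entry σ 0) 1 ᵥ* (M1 side * Z)) sink ≠ 0 := by
  have hsink := single_start_vecMul_M1_mul_eq_smul_sink hZ hsame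
  have hstart : (Pi.single (start true) 1 ᵥ* (M1 side * Z)) sink ≠ 0 := by
    intro h0
    rw [h0, zero_smul] at hsink
    exact hne (sq_mul_eq_zero_of_vecMul_eq_zero hsink (hsame ▸ hsink)
      (single_sink_vecMul_M1_mul Z))
  refine ⟨hstart, ?_⟩
  rw [single_start_vecMul_M1_mul, Finset.sum_apply] at hstart
  obtain ⟨σ, -, hσ⟩ := Finset.exists_ne_zero_of_sum_ne_zero hstart
  exact ⟨σ, hσ⟩

theorem solvableSame_of_value_eq (hJD : ∀ σ (i : Fin t), J σ i ≤ D) {n s : ℕ} {y : List ℕ}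
    (hpos : ∀ a ∈ n :: s :: y, 0 < a) (hlen : (n :: s :: y).length = t)
    (heq : value side J true (n :: s :: y) = value side J false (n :: s :: y))
    (hne : value side J true (n :: s :: y) ≠ 0) :
    SolvableSame (M1 side : Mat ι t D) (M2 J) n s := by
  have hstart b := single_start_vecMul_word (side := side) (D := D) hJD b _ hpos hlen
  refine ⟨word _ _ y, word_mem_closure _ _ y, ?_, fun h => hne ?_⟩
  · simp only [pow_mul_eq_pow_mul_word_mul, ← word_append, List.cons_append, List.nil_append]
    exact sq_mul_eq_cube_mul_of_start_vecMul_eq (by rw [hstart, hstart, heq])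
  · have h0 := congrFun (congrFun h head0) sink
    rw [pow_mul_eq_pow_mul_word_mul, ← word_append, List.cons_append, List.cons_append,
      List.nil_append, Matrix.mul_apply_eq_vecMul, M2_sq_head0, hstart] at h0
    simpa using h0

theorem exists_value_eq_of_solvablePair (hJD : ∀ σ (i : Fin t), J σ i ≤ D) (ht : 2 ≤ t)
    {n s : ℕ} (hn : 0 < n) (h : SolvablePair (M1 side : Mat ι t D) (M2 J) n s) :
    ∃ y, (n :: s :: y).length = t ∧ (∀ a ∈ n :: s :: y, 0 < a) ∧
      value side J true (n :: s :: y) = value side J false (n :: s :: y) ∧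
      value side J true (n :: s :: y) ≠ 0 := by
  obtain ⟨N₁, hN₁, N₂, -, heq, hne⟩ := h
  obtain ⟨L, r, rfl⟩ := exists_word_of_mem_closure _ _ hN₁
  simp only [pow_mul_eq_pow_mul_word_mul, ← mul_assoc (word _ _ [n, s]), ← word_append,
    List.cons_append, List.nil_append] at heq hne
  obtain ⟨htrue, hfalse⟩ := start_vecMul_eq_of_sq_mul_eq_cube_mul heq
  obtain ⟨n, rfl⟩ := Nat.exists_eq_add_of_lt hn
  obtain ⟨Z, hZ, hXZ⟩ := exists_mul_eq_word_cons_add_one_mul (M1 side : Mat ι t D) (M2 J)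
    (0 + n) (s :: L) (Submonoid.pow_mem _ (Submonoid.subset_closure (Set.mem_insert _ _)) r)
  rw [hXZ] at htrue hfalse hne
  obtain ⟨hstart, σ, hσ⟩ :=
    single_start_vecMul_M1_mul_apply_sink_ne_zero hZ (htrue.trans hfalse.symm) hne
  rw [← hXZ] at htrue hfalse hstart hσ
  obtain ⟨rfl, x, j, hlen, hpos, hL⟩ :=
    eq_append_replicate_of_single_entry_vecMul_apply_ne_zero hJD σ _ r 0 (NeZero.pos t) hσ
  have hval b : Pi.single (start b) 1 ᵥ*
      (word (M1 side : Mat ι t D) (M2 J) ((0 + n + 1) :: s :: L) * M1 side ^ 0) =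
      value side J b x • Pi.single sink 1 := by
    rw [pow_zero, mul_one, hL, word_append, word_replicate_zero, ← vecMul_vecMul,
      single_start_vecMul_word hJD b x hpos hlen, smul_vecMul, single_sink_vecMul_M2_pow]
  obtain ⟨y, rfl⟩ := List.exists_eq_cons_cons_of_cons_cons_eq_append (by omega) hL
  have hsink := congrFun (htrue.trans hfalse.symm) sink
  rw [hval, hval] at hsink
  rw [hval] at hstart
  exact ⟨y, hlen, hpos, by simpa using hsink, by simpa using hstart⟩

theorem exists_cons_cons_iff_solvableSame (hJD : ∀ σ (i : Fin t), J σ i ≤ D) (ht : 2 ≤ t)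
    {n s : ℕ} (hn : 0 < n) :
    (∃ y, (n :: s :: y).length = t ∧ (∀ a ∈ n :: s :: y, 0 < a) ∧
      (value side J true (n :: s :: y) = value side J false (n :: s :: y) ∧
        value side J true (n :: s :: y) ≠ 0)) ↔
      SolvableSame (M1 side : Mat ι t D) (M2 J) n s :=
  ⟨fun ⟨_, hlen, hpos, heq, hne⟩ => solvableSame_of_value_eq hJD hpos hlen heq hne,
    fun h => exists_value_eq_of_solvablePair hJD ht hn h.solvablePair⟩

theorem solvableSame_iff_solvablePair (hJD : ∀ σ (i : Fin t), J σ i ≤ D) (ht : 2 ≤ t)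
    {n s : ℕ} (hn : 0 < n) :
    SolvableSame (M1 side : Mat ι t D) (M2 J) n s ↔
      SolvablePair (M1 side : Mat ι t D) (M2 J) n s :=
  ⟨SolvableSame.solvablePair, fun h => (exists_cons_cons_iff_solvableSame hJD ht hn).mp
    (exists_value_eq_of_solvablePair hJD ht hn h)⟩

end Automaton

section Encoding

variable {t : ℕ} (Sp Sq : Multiset (Fin t → ℕ))

def sumExponents (σ : Sp ⊕ Sq) (i : ℕ) : ℕ :=
  if h : i < t then
    σ.elim (fun a : Sp => (a : Fin t → ℕ) ⟨i, h⟩) (fun b : Sq => (b : Fin t → ℕ) ⟨i, h⟩)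
  else 0

theorem weight_sumExponents_ofFn (σ : Sp ⊕ Sq) (m : Fin t → ℕ) :
    weight (sumExponents Sp Sq) σ 0 (List.ofFn m) =
      σ.elim (fun a : Sp => chooseProd m a) (fun b : Sq => chooseProd m b) := by
  rw [weight_ofFn]
  cases σ <;> simp [sumExponents, chooseProd]

theorem value_sumExponents_ofFn (m : Fin t → ℕ) :
    value Sum.isLeft (sumExponents Sp Sq) true (List.ofFn m) = (Sp.map (chooseProd m)).sum ∧
      value Sum.isLeft (sumExponents Sp Sq) false (List.ofFn m) = (Sq.map (chooseProd m)).sum := by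
  simp only [value, Finset.sum_filter, Fintype.sum_sum_type, Sum.isLeft_inl, Sum.isLeft_inr,
    if_true, Bool.false_eq_true, if_false, Finset.sum_const_zero, add_zero,
    weight_sumExponents_ofFn, Sum.elim_inl, Sum.elim_inr]
  simp [Finset.sum_eq_multiset_sum]

theorem exists_upperTriangular_solvableSame_iff (ht : 2 ≤ t)
    (hSp : ∀ m : Fin t → ℕ, (∀ i, 0 < m i) → (Sp.map (chooseProd m)).sum ≠ 0) :
    ∃ (k : ℕ) (A B : Matrix (Fin k) (Fin k) ℕ),
      0 < k ∧ MatrixUpperTriangular A ∧ MatrixUpperTriangular B ∧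
      ∀ n s : ℕ, 0 < n →
        ((∃ m : Fin t → ℕ, (∀ i, 0 < m i) ∧ m ⟨0, Nat.zero_lt_two.trans_le ht⟩ = n ∧
            m ⟨1, Nat.one_lt_two.trans_le ht⟩ = s ∧
            (Sp.map (chooseProd m)).sum = (Sq.map (chooseProd m)).sum) ↔
          SolvableSame A B n s) ∧
        (SolvableSame A B n s ↔ SolvablePair A B n s) := by
  classical
  have : NeZero t := ⟨by omega⟩
  let J := sumExponents Sp Sq
  let D := ∑ σ, ∑ i : Fin t, J σ i
  have hJD : ∀ σ (i : Fin t), J σ i ≤ D := fun σ i =>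
    (Finset.single_le_sum (f := fun i : Fin t => J σ i) (by simp) (Finset.mem_univ i)).trans
      (Finset.single_le_sum (f := fun σ => ∑ i : Fin t, J σ i) (by simp) (Finset.mem_univ σ))
  obtain ⟨e, he⟩ := exists_equiv_fin_upperTriangular (rank : State (Sp ⊕ Sq) t D → ℕ)
  let f := (Matrix.reindexAlgEquiv ℕ ℕ e).toRingEquiv.toMulEquiv
  refine ⟨_, f (M1 Sum.isLeft), f (M2 J), Fintype.card_pos_iff.mpr ⟨State.sink⟩,
    he _ M1_triangular, he _ M2_triangular, fun n s hn => ?_⟩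
  rw [solvableSame_map_iff, solvablePair_map_iff, ← solvableSame_iff_solvablePair hJD ht hn,
    ← exists_cons_cons_iff_solvableSame hJD ht hn]
  refine ⟨Iff.trans ?_ (List.exists_ofFn_iff_exists_cons_cons ht n s fun x =>
    value Sum.isLeft J true x = value Sum.isLeft J false x ∧ value Sum.isLeft J true x ≠ 0),
    Iff.rfl⟩
  refine exists_congr fun m => and_congr_right fun hm => ?_
  obtain ⟨hvp, hvq⟩ := value_sumExponents_ofFn Sp Sq m
  simp only [J, hvp, hvq]
  exact and_congr_right fun _ => and_congr_right fun _ => (and_iff_left (hSp m hm)).symm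

end Encoding

end DiophantineAutomaton

/-- equivalence of the Diophantine condition with the solvability of the
linear equations `M2² Mprod(n,s) X = M2³ Mprod(n,s) X ≠ O` and
`M2² Mprod(n,s) X = M2³ Mprod(n,s) Y ≠ O` over the monoid generated by two upper
triangular matrices with nonnegative integer entries, where
`Mprod(n,s) = M1^n M2 M1^s M2`. -/
theorem statement6 (t : ℕ) (ht : 2 ≤ t) (p q : MvPolynomial (Fin t) ℕ)
    (hp : ∀ m : Fin t → ℕ, (∀ i, 0 < m i) → 0 < MvPolynomial.eval m p) :
    ∃ (k : ℕ) (M1 M2 : Matrix (Fin k) (Fin k) ℕ),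
      0 < k ∧ MatrixUpperTriangular M1 ∧ MatrixUpperTriangular M2 ∧
      ∀ n s : ℕ, 0 < n → 0 < s →
        (((∃ m : Fin t → ℕ, (∀ i, 0 < m i) ∧ m ⟨0, by omega⟩ = n ∧ m ⟨1, by omega⟩ = s ∧
              MvPolynomial.eval m p = MvPolynomial.eval m q) ↔
            (∃ N ∈ Submonoid.closure ({M1, M2} : Set (Matrix (Fin k) (Fin k) ℕ)),
              M2 ^ 2 * M1 ^ n * M2 * M1 ^ s * M2 * N =
                M2 ^ 3 * M1 ^ n * M2 * M1 ^ s * M2 * N ∧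
              M2 ^ 2 * M1 ^ n * M2 * M1 ^ s * M2 * N ≠ 0)) ∧
          ((∃ N ∈ Submonoid.closure ({M1, M2} : Set (Matrix (Fin k) (Fin k) ℕ)),
              M2 ^ 2 * M1 ^ n * M2 * M1 ^ s * M2 * N =
                M2 ^ 3 * M1 ^ n * M2 * M1 ^ s * M2 * N ∧
              M2 ^ 2 * M1 ^ n * M2 * M1 ^ s * M2 * N ≠ 0) ↔
            (∃ N1 ∈ Submonoid.closure ({M1, M2} : Set (Matrix (Fin k) (Fin k) ℕ)),
              ∃ N2 ∈ Submonoid.closure ({M1, M2} : Set (Matrix (Fin k) (Fin k) ℕ)),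
              M2 ^ 2 * M1 ^ n * M2 * M1 ^ s * M2 * N1 =
                M2 ^ 3 * M1 ^ n * M2 * M1 ^ s * M2 * N2 ∧
              M2 ^ 2 * M1 ^ n * M2 * M1 ^ s * M2 * N1 ≠ 0))) := by
  obtain ⟨Sp, hSp⟩ := MvPolynomial.exists_multiset_eval_eq_sum_chooseProd p
  obtain ⟨Sq, hSq⟩ := MvPolynomial.exists_multiset_eval_eq_sum_chooseProd q
  obtain ⟨k, A, B, hk, hA, hB, h⟩ :=
    DiophantineAutomaton.exists_upperTriangular_solvableSame_iff Sp Sq ht fun m hm =>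
      hSp m hm ▸ (hp m hm).ne'
  refine ⟨k, A, B, hk, hA, hB, fun n s hn _ => ⟨Iff.trans ?_ (h n s hn).1, (h n s hn).2⟩⟩
  refine exists_congr fun m => and_congr_right fun hm => ?_
  rw [hSp m hm, hSq m hm]
end
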